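/- arXiv:1104.1442 — 3 statements merged into one kernel-verified Lean document; each statement's English description precedes it below -/
import Mathlib

section
/- Let (Σ_A, T) be a topologically mixing subshift of finite type, Φ ∈ C_aa(Σ_A,T,d), and let 0 < C_1 ≤ C_2 be constants. Define ‖Φ‖_n^⋆ := max{‖Φ‖_l : C_1 n ≤ l ≤ C_2 n}. Then ‖Φ‖_n^⋆/n → 0 as n → ∞; in particular lim_{n→∞} ‖Φ‖_n/n = 0. -/
open Filter Topology MeasureTheory Set
open scoped ENNReal NNReal

namespace AlmostAdditivePaper

variable {m : ℕ}

/-- The one-sided subshift of finite type determined by a transition matrix `A`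
(with entries `0`/`1`). -/
abbrev Subshift (A : Matrix (Fin m) (Fin m) ℕ) : Type :=
  {x : ℕ → Fin m // ∀ n, A (x n) (x (n + 1)) = 1}

/-- The left shift map `T`. -/
def shiftT (A : Matrix (Fin m) (Fin m) ℕ) : Subshift A → Subshift A :=
  fun x => ⟨fun n => x.1 (n + 1), fun n => x.2 (n + 1)⟩

/-- `A` is a 0-1 matrix with `A ^ p₀ > 0` entrywise for some `p₀ ≥ 1`:
the subshift `Σ_A` is topologically mixing. -/
def Mixing (A : Matrix (Fin m) (Fin m) ℕ) : Prop :=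
  (∀ i j, A i j = 0 ∨ A i j = 1) ∧ ∃ p₀ : ℕ, 0 < p₀ ∧ ∀ i j, 0 < (A ^ p₀) i j

/-- Scalar almost additive potential `Φ = (φ_n)_{n ≥ 1}` with constant `C = C(Φ)`;
we use the convention `φ₀ = 0`. -/
structure AlmostAdditive (A : Matrix (Fin m) (Fin m) ℕ)
    (Φ : ℕ → Subshift A → ℝ) (C : ℝ) : Prop where
  posC : 0 < C
  cont : ∀ n, Continuous (Φ n)
  zero : ∀ x, Φ 0 x = 0
  upper : ∀ n p x, Φ (n + p) x ≤ Φ n x + Φ p ((shiftT A)^[n] x) + C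
  lower : ∀ n p x, Φ n x + Φ p ((shiftT A)^[n] x) - C ≤ Φ (n + p) x

/-- Vector-valued almost additive potential: each component is almost additive,
with constant `C j` for the `j`-th component. -/
def AlmostAdditiveVec {d : ℕ} (A : Matrix (Fin m) (Fin m) ℕ)
    (Φ : ℕ → Subshift A → EuclideanSpace ℝ (Fin d)) (C : Fin d → ℝ) : Prop :=
  ∀ j : Fin d, AlmostAdditive A (fun n x => Φ n x j) (C j)

/-- The cylinder `[w]` of a word `w`. -/
def cyl (A : Matrix (Fin m) (Fin m) ℕ) (w : List (Fin m)) : Set (Subshift A) :=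
  {x | ∀ i : Fin w.length, x.1 i.1 = w.get i}

/-- The word `w` is admissible. -/
def AdmWord (A : Matrix (Fin m) (Fin m) ℕ) (w : List (Fin m)) : Prop :=
  ∀ i : ℕ, (h : i + 1 < w.length) → A (w.get ⟨i, by omega⟩) (w.get ⟨i + 1, h⟩) = 1

/-- `x|_n`, the prefix of length `n` of `x ∈ Σ_A`. -/
def wordPrefix {A : Matrix (Fin m) (Fin m) ℕ} (x : Subshift A) (n : ℕ) : List (Fin m) :=
  List.ofFn fun i : Fin n => x.1 i

/-- `Φ[w] := sup {exp (φ_{|w|}(x)) : x ∈ [w]}`. -/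
noncomputable def wordSup (A : Matrix (Fin m) (Fin m) ℕ) (Φ : ℕ → Subshift A → ℝ)
    (w : List (Fin m)) : ℝ :=
  sSup ((fun x => Real.exp (Φ w.length x)) '' cyl A w)

/-- The distance `d_Ψ(x,y) = Ψ[x ∧ y]` associated with a potential `Ψ`. -/
noncomputable def dPsi (A : Matrix (Fin m) (Fin m) ℕ) (Ψ : ℕ → Subshift A → ℝ)
    (x y : Subshift A) : ℝ :=
  letI := Classical.dec (x = y)
  if h : x = y then 0
  else wordSup A Ψ (wordPrefix x (Nat.find (show ∃ n, x.1 n ≠ y.1 n by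
    by_contra hc
    push_neg at hc
    exact h (Subtype.ext (funext hc)))))

/-- The closed ball of center `x` and radius `r` for `d_Ψ`. -/
def ballD (A : Matrix (Fin m) (Fin m) ℕ) (Ψ : ℕ → Subshift A → ℝ)
    (x : Subshift A) (r : ℝ) : Set (Subshift A) :=
  {y | dPsi A Ψ x y ≤ r}

/-- `B_t(Ψ)`: words whose cylinder is a closed ball of radius `e^{-t}` in `(Σ_A, d_Ψ)`. -/
def Bn (A : Matrix (Fin m) (Fin m) ℕ) (Ψ : ℕ → Subshift A → ℝ) (t : ℝ) :
    Set (List (Fin m)) :=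
  {w | ∃ x, cyl A w = ballD A Ψ x (Real.exp (-t))}

variable {E : Type*} [NormedAddCommGroup E] [NormedSpace ℝ E]

/-- `‖φ‖_n := sup {|φ(x) − φ(y)| : x|_n = y|_n}`. -/
noncomputable def varN (A : Matrix (Fin m) (Fin m) ℕ) (φ : Subshift A → E) (n : ℕ) : ℝ :=
  sSup {r | ∃ x y : Subshift A, wordPrefix x n = wordPrefix y n ∧ r = ‖φ x - φ y‖}

/-- The sup norm `‖φ‖_∞`. -/
noncomputable def supNorm (A : Matrix (Fin m) (Fin m) ℕ) (φ : Subshift A → E) : ℝ :=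
  sSup (Set.range fun x => ‖φ x‖)

/-- `‖Φ − Θ‖_lim := limsup_n ‖φ_n − θ_n‖_∞ / n`. -/
noncomputable def limNorm (A : Matrix (Fin m) (Fin m) ℕ) (Φ Θ : ℕ → Subshift A → E) : ℝ :=
  Filter.limsup (fun n : ℕ => supNorm A (fun x => Φ n x - Θ n x) / n) atTop

/-- `Φ_max := max φ₁ + C(Φ)`. -/
noncomputable def PhiMax (A : Matrix (Fin m) (Fin m) ℕ) (Φ : ℕ → Subshift A → ℝ)
    (C : ℝ) : ℝ :=
  sSup (Set.range (Φ 1)) + C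

/-- `Φ_min := min φ₁ − C(Φ)`. -/
noncomputable def PhiMin (A : Matrix (Fin m) (Fin m) ℕ) (Φ : ℕ → Subshift A → ℝ)
    (C : ℝ) : ℝ :=
  sInf (Set.range (Φ 1)) - C

/-- `‖Φ‖ := |Φ_max| ∨ |Φ_min|`. -/
noncomputable def PhiNorm (A : Matrix (Fin m) (Fin m) ℕ) (Φ : ℕ → Subshift A → ℝ)
    (C : ℝ) : ℝ :=
  max |PhiMax A Φ C| |PhiMin A Φ C|

/-- `μ` is a `T`-invariant Borel probability measure. -/
def InvMeasure (A : Matrix (Fin m) (Fin m) ℕ) (μ : Measure (Subshift A)) : Prop :=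
  IsProbabilityMeasure μ ∧ μ.map (shiftT A) = μ

/-- `L_Φ = {Φ_*(μ) : μ ∈ M(Σ_A,T)}`, where `Φ_*(μ) = lim_n (1/n) ∫ φ_n dμ`. -/
def LPhi (A : Matrix (Fin m) (Fin m) ℕ) (Φ : ℕ → Subshift A → E) : Set E :=
  {α | ∃ μ : Measure (Subshift A), InvMeasure A μ ∧
      Tendsto (fun n : ℕ => (n : ℝ)⁻¹ • ∫ x, Φ n x ∂μ) atTop (𝓝 α)}

/-- `Φ_*(μ) = lim_n (1/n) ∫ φ_n dμ`. -/
noncomputable def potStar (A : Matrix (Fin m) (Fin m) ℕ) (Φ : ℕ → Subshift A → E)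
    (μ : Measure (Subshift A)) : E :=
  limUnder atTop fun n : ℕ => (n : ℝ)⁻¹ • ∫ x, Φ n x ∂μ

/-- Entropy of the partition of `Σ_A` into cylinders of length `n`. -/
noncomputable def cylEnt (A : Matrix (Fin m) (Fin m) ℕ) (μ : Measure (Subshift A))
    (n : ℕ) : ℝ :=
  ∑ w : Fin n → Fin m, Real.negMulLog ((μ (cyl A (List.ofFn w))).toReal)

/-- The measure-theoretic (Kolmogorov–Sinai) entropy `h_μ(T)`, computed through the
natural generating partition into cylinders. -/
noncomputable def entKS (A : Matrix (Fin m) (Fin m) ℕ) (μ : Measure (Subshift A)) : ℝ :=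
  limUnder atTop fun n : ℕ => cylEnt A μ n / n

/-- The level set `E_Φ(α) = {x : lim_n φ_n(x)/n = α}`. -/
def EPhi (A : Matrix (Fin m) (Fin m) ℕ) (Φ : ℕ → Subshift A → E) (α : E) :
    Set (Subshift A) :=
  {x | Tendsto (fun n : ℕ => (n : ℝ)⁻¹ • Φ n x) atTop (𝓝 α)}

/-- The localized level set `E_Φ(ξ) = {x : lim_n φ_n(x)/n = ξ(x)}`. -/
def EPhiXi (A : Matrix (Fin m) (Fin m) ℕ) (Φ : ℕ → Subshift A → E)
    (ξ : Subshift A → E) : Set (Subshift A) :=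
  {x | Tendsto (fun n : ℕ => (n : ℝ)⁻¹ • Φ n x) atTop (𝓝 (ξ x))}

/-- `F(α,t,ε,Φ,Ψ)`. -/
def Fset (A : Matrix (Fin m) (Fin m) ℕ) (Φ : ℕ → Subshift A → E)
    (Ψ : ℕ → Subshift A → ℝ) (α : E) (t ε : ℝ) : Set (List (Fin m)) :=
  {u | u ∈ Bn A Ψ t ∧ ∃ x ∈ cyl A u, ‖(u.length : ℝ)⁻¹ • Φ u.length x - α‖ < ε}

/-- `f(α,t,ε,Φ,Ψ) = # F(α,t,ε,Φ,Ψ)`. -/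
noncomputable def fcard (A : Matrix (Fin m) (Fin m) ℕ) (Φ : ℕ → Subshift A → E)
    (Ψ : ℕ → Subshift A → ℝ) (α : E) (t ε : ℝ) : ℕ :=
  Nat.card (Fset A Φ Ψ α t ε)

/-- The large deviation spectrum
`Λ(α) = lim_{ε → 0⁺} limsup_n log f(α,n,ε) / n`. -/
noncomputable def LambdaD (A : Matrix (Fin m) (Fin m) ℕ) (Φ : ℕ → Subshift A → E)
    (Ψ : ℕ → Subshift A → ℝ) (α : E) : ℝ :=
  limUnder (𝓝[>] (0 : ℝ)) fun ε : ℝ =>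
    Filter.limsup (fun n : ℕ => Real.log (fcard A Φ Ψ α n ε) / n) atTop

/-- `D(Ψ) = lim_n log (# B_n(Ψ)) / n`. -/
noncomputable def DPsi (A : Matrix (Fin m) (Fin m) ℕ) (Ψ : ℕ → Subshift A → ℝ) : ℝ :=
  limUnder atTop fun n : ℕ => Real.log (Nat.card (Bn A Ψ (n : ℝ))) / n

/-- The conditional variational principle quantity
`E(α) = sup {h_μ(T)/(-Ψ_*(μ)) : μ invariant, Φ_*(μ) = α}`. -/
noncomputable def EEsup (A : Matrix (Fin m) (Fin m) ℕ) (Φ : ℕ → Subshift A → E)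
    (Ψ : ℕ → Subshift A → ℝ) (α : E) : ℝ :=
  sSup {r | ∃ μ : Measure (Subshift A), InvMeasure A μ ∧ potStar A Φ μ = α ∧
    r = entKS A μ / (-(potStar A Ψ μ))}

/-! ### Dimensions relative to a distance function `ρ` -/

/-- Diameter of a set, relative to a distance function `ρ`. -/
noncomputable def setDiam {X : Type*} (ρ : X → X → ℝ) (U : Set X) : ℝ≥0∞ :=
  ⨆ x ∈ U, ⨆ y ∈ U, ENNReal.ofReal (ρ x y)

/-- `s`-dimensional Hausdorff measure relative to `ρ`. -/
noncomputable def hMeasD {X : Type*} (ρ : X → X → ℝ) (s : ℝ) (e : Set X) : ℝ≥0∞ :=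
  ⨆ (δ : ℝ) (_ : 0 < δ),
    ⨅ (U : ℕ → Set X) (_ : e ⊆ ⋃ n, U n) (_ : ∀ n, setDiam ρ (U n) ≤ ENNReal.ofReal δ),
      ∑' n, setDiam ρ (U n) ^ s

/-- Hausdorff dimension relative to `ρ`. -/
noncomputable def hdimD {X : Type*} (ρ : X → X → ℝ) (e : Set X) : ℝ≥0∞ :=
  ⨆ (s : ℝ≥0) (_ : hMeasD ρ (s : ℝ) e = ⊤), (s : ℝ≥0∞)

/-- Minimal number of sets of diameter `≤ δ` needed to cover `e` (relative to `ρ`). -/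
noncomputable def coverNum {X : Type*} (ρ : X → X → ℝ) (e : Set X) (δ : ℝ) : ℕ :=
  sInf {k : ℕ | ∃ U : Fin k → Set X, e ⊆ ⋃ i, U i ∧ ∀ i, setDiam ρ (U i) ≤ ENNReal.ofReal δ}

/-- Upper box-counting dimension relative to `ρ`. -/
noncomputable def uboxD {X : Type*} (ρ : X → X → ℝ) (e : Set X) : ℝ≥0∞ :=
  Filter.limsup (fun n : ℕ =>
    ENNReal.ofReal (Real.log (coverNum ρ e (Real.exp (-(n : ℝ)))) / n)) atTop

/-- Lower box-counting dimension relative to `ρ`. -/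
noncomputable def lboxD {X : Type*} (ρ : X → X → ℝ) (e : Set X) : ℝ≥0∞ :=
  Filter.liminf (fun n : ℕ =>
    ENNReal.ofReal (Real.log (coverNum ρ e (Real.exp (-(n : ℝ)))) / n)) atTop

/-- Packing dimension relative to `ρ` (via the modified upper box dimension). -/
noncomputable def pdimD {X : Type*} (ρ : X → X → ℝ) (e : Set X) : ℝ≥0∞ :=
  ⨅ (F : ℕ → Set X) (_ : e ⊆ ⋃ n, F n), ⨆ n, uboxD ρ (F n)

/-! ### Weak concavity and cone points -/

/-- `h` is weakly concave on the convex set `s`. -/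
def WeaklyConcaveOn {V : Type*} [AddCommGroup V] [Module ℝ V] (s : Set V) (h : V → ℝ) :
    Prop :=
  ∃ c : ℝ, 1 ≤ c ∧ ∀ α ∈ s, ∀ β ∈ s, ∃ γ₁ ∈ Set.Icc c⁻¹ c, ∃ γ₂ ∈ Set.Icc c⁻¹ c,
    ∀ l ∈ Set.Icc (0 : ℝ) 1,
      l * h α + (1 - l) * h β ≤
        h ((l * γ₁ + (1 - l) * γ₂)⁻¹ • ((l * γ₁) • α + ((1 - l) * γ₂) • β))

/-- `x` is an `ε`-cone point of `s`. -/
def IsConePoint {V : Type*} [NormedAddCommGroup V] [NormedSpace ℝ V] (s : Set V)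
    (x : V) (ε : ℝ) : Prop :=
  ∀ y ∈ s ∩ Metric.ball x ε, y ≠ x → segment ℝ x (x + (ε / ‖y - x‖) • (y - x)) ⊆ s

/-- `x` is a local cone point of `s`. -/
def IsLocalConePoint {V : Type*} [NormedAddCommGroup V] [NormedSpace ℝ V] (s : Set V)
    (x : V) : Prop :=
  ∃ ε > 0, IsConePoint s x ε

/-!
Write `a n = ‖φ_n‖_n`. Splitting `φ_{p+n}` almost additively into `φ_p` and `φ_n ∘ T^p` gives
`a (p + n) ≤ a n + ‖φ_p‖_{p+n} + 2C`. By compactness `‖φ_p‖_l → 0` as `l → ∞`, so for every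
block length `p` eventually `a (p + n) ≤ a n + 3C`, whence `limsup a n / n ≤ 3C / p`; letting
`p → ∞` gives `a n / n → 0`. The window maximum over `C₁ n ≤ l ≤ C₂ n` then only involves
lengths `l → ∞` with `l / n ≤ C₂`.
-/

section

variable {A : Matrix (Fin m) (Fin m) ℕ} {F : Type*} [NormedAddCommGroup F]

instance : CompactSpace (Subshift A) := by
  have hclosed : IsClosed {x : ℕ → Fin m | ∀ n, A (x n) (x (n + 1)) = 1} := by
    rw [ofPred_forall]
    exact isClosed_iInter fun n => isClosed_eq
      ((continuous_of_discreteTopology (f := fun p : Fin m × Fin m => A p.1 p.2)).comp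
        (by fun_prop : Continuous fun x : ℕ → Fin m => (x n, x (n + 1)))) continuous_const
  exact isCompact_iff_compactSpace.mp hclosed.isCompact

lemma wordPrefix_eq_iff {x y : Subshift A} {n : ℕ} :
    wordPrefix x n = wordPrefix y n ↔ ∀ i < n, x.1 i = y.1 i := by
  rw [wordPrefix, wordPrefix, List.ofFn_inj, funext_iff]
  exact ⟨fun h i hi => h ⟨i, hi⟩, fun h i => h i i.2⟩

lemma shiftT_iterate_apply (k : ℕ) (x : Subshift A) (i : ℕ) :
    ((shiftT A)^[k] x).1 i = x.1 (i + k) := by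
  induction k generalizing i with
  | zero => rfl
  | succ k ih =>
    rw [Function.iterate_succ_apply']
    exact (ih (i + 1)).trans (congrArg x.1 (by omega))

lemma varN_nonneg (φ : Subshift A → F) (n : ℕ) : 0 ≤ varN A φ n :=
  Real.sSup_nonneg fun _ ⟨_, _, _, hr⟩ => hr ▸ norm_nonneg _

lemma varN_le {φ : Subshift A → F} {n : ℕ} {r : ℝ} (hr : 0 ≤ r)
    (h : ∀ x y, wordPrefix x n = wordPrefix y n → ‖φ x - φ y‖ ≤ r) : varN A φ n ≤ r :=
  Real.sSup_le (fun _ ⟨x, y, hxy, hs⟩ => hs ▸ h x y hxy) hr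

lemma norm_sub_le_varN {φ : Subshift A → F} (hφ : Continuous φ) {n : ℕ}
    {x y : Subshift A} (h : wordPrefix x n = wordPrefix y n) : ‖φ x - φ y‖ ≤ varN A φ n := by
  have hbdd : BddAbove (range fun q : Subshift A × Subshift A => ‖φ q.1 - φ q.2‖) :=
    (isCompact_range (by fun_prop)).bddAbove
  exact le_csSup (hbdd.mono fun _ ⟨x, y, _, hr⟩ => mem_range.2 ⟨(x, y), hr.symm⟩) ⟨x, y, h, rfl⟩

/-- The pairs agreeing on longer and longer prefixes shrink to the diagonal, so by compactness
they eventually lie in any neighbourhood of it. -/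
lemma tendsto_varN_zero {φ : Subshift A → F} (hφ : Continuous φ) :
    Tendsto (varN A φ) atTop (𝓝 0) := by
  let V : ℕ → Set (Subshift A × Subshift A) := fun n => {q | ∀ i < n, q.1.1 i = q.2.1 i}
  have hV_closed (n : ℕ) : IsClosed (V n) := by
    simp only [V, ofPred_forall]
    exact isClosed_iInter fun i => isClosed_iInter fun _ =>
      isClosed_eq ((continuous_apply i).comp (continuous_subtype_val.comp continuous_fst))
        ((continuous_apply i).comp (continuous_subtype_val.comp continuous_snd))
  have hV_anti : Antitone V := fun n n' hnn' q hq i hi => hq i (hi.trans_le hnn')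
  refine tendsto_order.2 ⟨fun r hr => .of_forall fun n => hr.trans_le (varN_nonneg φ n),
    fun ε hε => ?_⟩
  obtain ⟨N, hN⟩ : ∃ N, V N ⊆ {q | ‖φ q.1 - φ q.2‖ < ε / 2} := by
    refine exists_subset_nhds_of_isCompact' hV_anti.directed_ge (fun n => (hV_closed n).isCompact)
      hV_closed fun q hq => (isOpen_lt (by fun_prop) continuous_const).mem_nhds ?_
    have hdiag : q.1 = q.2 :=
      Subtype.ext <| funext fun i => mem_iInter.1 hq (i + 1) i i.lt_succ_self
    simp [hdiag, hε]
  filter_upwards [eventually_ge_atTop N] with n hn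
  have hle : varN A φ n ≤ ε / 2 := varN_le (by positivity) fun x y hxy =>
    le_of_lt (hN (a := (x, y)) (hV_anti hn (wordPrefix_eq_iff.1 hxy)))
  linarith

lemma AlmostAdditive.varN_add_le {ψ : ℕ → Subshift A → ℝ} {c : ℝ} (hψ : AlmostAdditive A ψ c)
    (p n : ℕ) :
    varN A (ψ (p + n)) (p + n) ≤ varN A (ψ p) (p + n) + varN A (ψ n) n + 2 * c := by
  have hc := hψ.posC
  refine varN_le (by linarith [varN_nonneg (ψ p) (p + n), varN_nonneg (ψ n) n])
    fun x y hxy => ?_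
  have hshift : wordPrefix ((shiftT A)^[p] x) n = wordPrefix ((shiftT A)^[p] y) n := by
    refine wordPrefix_eq_iff.2 fun i hi => ?_
    rw [shiftT_iterate_apply, shiftT_iterate_apply]
    exact wordPrefix_eq_iff.1 hxy _ (by omega)
  have hp := norm_sub_le_varN (hψ.cont p) hxy
  have hn := norm_sub_le_varN (hψ.cont n) hshift
  rw [Real.norm_eq_abs, abs_le] at hp hn ⊢
  have := hψ.upper p n x
  have := hψ.lower p n x
  have := hψ.upper p n y
  have := hψ.lower p n y
  constructor <;> linarith

lemma exists_le_add_mul_of_add_le {a : ℕ → ℝ} {p L : ℕ} {b : ℝ} (hp : 0 < p) (hb : 0 ≤ b)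
    (h : ∀ n ≥ L, a (p + n) ≤ a n + b) : ∃ M, ∀ n, a n ≤ M + b / p * n := by
  refine ⟨∑ k ∈ Finset.range (L + p), |a k|, fun n => ?_⟩
  induction n using Nat.strong_induction_on with
  | _ n ih =>
    rcases lt_or_ge n (L + p) with hn | hn
    · have := Finset.single_le_sum (fun k _ => abs_nonneg (a k)) (Finset.mem_range.2 hn)
      have : 0 ≤ b / p * n := by positivity
      linarith [le_abs_self (a n)]
    · obtain ⟨k, rfl⟩ : ∃ k, n = p + k := ⟨n - p, by omega⟩
      have hk := ih k (by omega)
      have hstep : b / p * (p + k : ℕ) = b / p * k + b := by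
        push_cast
        field_simp
        ring
      linarith [h k (by omega)]

lemma tendsto_div_atTop_zero_of_add_le {a : ℕ → ℝ} (ha : ∀ n, 0 ≤ a n)
    (h : ∀ ε > 0, ∃ p > 0, ∃ L, ∀ n ≥ L, a (p + n) ≤ a n + ε * p) :
    Tendsto (fun n => a n / n) atTop (𝓝 0) := by
  refine tendsto_order.2 ⟨fun r hr => .of_forall fun n => hr.trans_le (by have := ha n; positivity),
    fun ε hε => ?_⟩
  obtain ⟨p, hp, L, hL⟩ := h (ε / 2) (by positivity)
  obtain ⟨M, hM⟩ := exists_le_add_mul_of_add_le hp (by positivity) hL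
  have hMn : Tendsto (fun n : ℕ => M / n) atTop (𝓝 0) := tendsto_const_div_atTop_nhds_zero_nat M
  filter_upwards [hMn.eventually (gt_mem_nhds (half_pos hε)), eventually_gt_atTop 0]
    with n hMn hn
  have hp' : (p : ℝ) ≠ 0 := by positivity
  calc a n / n ≤ (M + ε / 2 * p / p * n) / n := by gcongr; exact hM n
    _ = M / n + ε / 2 := by field_simp
    _ < ε := by linarith

lemma AlmostAdditive.tendsto_varN_div {ψ : ℕ → Subshift A → ℝ} {c : ℝ}
    (hψ : AlmostAdditive A ψ c) : Tendsto (fun n => varN A (ψ n) n / n) atTop (𝓝 0) := by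
  refine tendsto_div_atTop_zero_of_add_le (fun n => varN_nonneg _ n) fun ε hε => ?_
  obtain ⟨p, hp⟩ := exists_nat_gt (4 * c / ε)
  have hp₀ : (0 : ℝ) < p := (div_pos (by linarith [hψ.posC]) hε).trans hp
  have hcp : 2 * c ≤ ε * p / 2 := by rw [div_lt_iff₀ hε] at hp; linarith
  obtain ⟨L, hL⟩ := eventually_atTop.1 <|
    (tendsto_varN_zero (hψ.cont p)).eventually (ge_mem_nhds (half_pos (mul_pos hε hp₀)))
  refine ⟨p, by exact_mod_cast hp₀, L, fun n hn => ?_⟩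
  linarith [hψ.varN_add_le p n, hL (p + n) (by omega)]

lemma _root_.EuclideanSpace.norm_le_sum_abs {ι : Type*} [Fintype ι] (v : EuclideanSpace ℝ ι) :
    ‖v‖ ≤ ∑ i, |v i| := by
  have habs : ∀ i ∈ Finset.univ, 0 ≤ |v i| := fun i _ => abs_nonneg _
  rw [EuclideanSpace.norm_eq, Real.sqrt_le_left (Finset.sum_nonneg habs)]
  simp only [Real.norm_eq_abs]
  exact Finset.sum_sq_le_sq_sum_of_nonneg habs

lemma AlmostAdditiveVec.tendsto_varN_div {d : ℕ} {Φ : ℕ → Subshift A → EuclideanSpace ℝ (Fin d)}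
    {C : Fin d → ℝ} (hΦ : AlmostAdditiveVec A Φ C) :
    Tendsto (fun n => varN A (Φ n) n / n) atTop (𝓝 0) := by
  have hsum := tendsto_finsetSum Finset.univ fun j _ => (hΦ j).tendsto_varN_div
  rw [Finset.sum_const_zero] at hsum
  refine squeeze_zero (fun n => by have := varN_nonneg (Φ n) n; positivity) (fun n => ?_) hsum
  rw [← Finset.sum_div]
  gcongr
  refine varN_le (Finset.sum_nonneg fun j _ => varN_nonneg _ n) fun x y hxy => ?_
  refine (EuclideanSpace.norm_le_sum_abs _).trans (Finset.sum_le_sum fun j _ => ?_)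
  exact norm_sub_le_varN ((hΦ j).cont n) hxy

lemma tendsto_sSup_window_div {f : ℕ → ℝ} (hf₀ : ∀ n, 0 ≤ f n)
    (hf : Tendsto (fun n => f n / n) atTop (𝓝 0)) {C₁ : ℝ} (hC₁ : 0 < C₁) (C₂ : ℝ) :
    Tendsto (fun n : ℕ =>
        sSup {r : ℝ | ∃ l : ℕ, C₁ * n ≤ (l : ℝ) ∧ (l : ℝ) ≤ C₂ * n ∧ r = f l} / n)
      atTop (𝓝 0) := by
  refine tendsto_order.2 ⟨fun r hr => .of_forall fun n => hr.trans_le ?_, fun ε hε => ?_⟩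
  · exact div_nonneg (Real.sSup_nonneg fun _ ⟨l, _, _, hr⟩ => hr ▸ hf₀ l) n.cast_nonneg
  set δ := ε / (|C₂| + 1)
  have hδ : 0 < δ := by positivity
  obtain ⟨L, hL⟩ :=
    eventually_atTop.1 <| (hf.eventually (gt_mem_nhds hδ)).and (eventually_gt_atTop 0)
  have hC₁n := (tendsto_natCast_atTop_atTop.const_mul_atTop hC₁).eventually_ge_atTop (L : ℝ)
  filter_upwards [hC₁n, eventually_gt_atTop 0] with n hLn hn
  have hn' : (0 : ℝ) < n := by exact_mod_cast hn
  have hsup : sSup {r : ℝ | ∃ l : ℕ, C₁ * n ≤ (l : ℝ) ∧ (l : ℝ) ≤ C₂ * n ∧ r = f l} ≤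
      δ * |C₂| * n := by
    refine Real.sSup_le (fun r ⟨l, hl₁, hl₂, hr⟩ => ?_) (by positivity)
    obtain ⟨hfl, hl⟩ := hL l (by exact_mod_cast hLn.trans hl₁)
    have hl' : (0 : ℝ) < l := by exact_mod_cast hl
    rw [div_lt_iff₀ hl'] at hfl
    calc r = f l := hr
      _ ≤ δ * l := hfl.le
      _ ≤ δ * (|C₂| * n) := by gcongr; exact hl₂.trans (by gcongr; exact le_abs_self C₂)
      _ = δ * |C₂| * n := by ring
  calc _ ≤ δ * |C₂| * n / n := by gcongr
    _ = δ * |C₂| := by field_simp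
    _ < ε := by
      rw [div_mul_eq_mul_div, div_lt_iff₀ (by positivity)]
      nlinarith

end

theorem statement2_general {m d : ℕ} (A : Matrix (Fin m) (Fin m) ℕ)
    (Φ : ℕ → Subshift A → EuclideanSpace ℝ (Fin d)) (C : Fin d → ℝ)
    (hΦ : AlmostAdditiveVec A Φ C) (C₁ C₂ : ℝ) (hC₁ : 0 < C₁) :
    Tendsto (fun n : ℕ =>
        sSup {r : ℝ | ∃ l : ℕ, C₁ * n ≤ (l : ℝ) ∧ (l : ℝ) ≤ C₂ * n ∧ r = varN A (Φ l) l}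
          / n) atTop (𝓝 0) ∧
    Tendsto (fun n : ℕ => varN A (Φ n) n / n) atTop (𝓝 0) :=
  ⟨tendsto_sSup_window_div (fun l => varN_nonneg (Φ l) l) hΦ.tendsto_varN_div hC₁ C₂,
    hΦ.tendsto_varN_div⟩

/-- For an almost additive `Φ ∈ C_aa(Σ_A,T,d)` and constants
`0 < C₁ ≤ C₂`, the quantity `‖Φ‖_n^⋆ = max {‖Φ‖_l : C₁ n ≤ l ≤ C₂ n}` satisfies
`‖Φ‖_n^⋆ / n → 0`; in particular `‖Φ‖_n / n → 0`. -/
theorem statement2 {m d : ℕ} (hm : 0 < m) (A : Matrix (Fin m) (Fin m) ℕ) (hA : Mixing A)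
    (Φ : ℕ → Subshift A → EuclideanSpace ℝ (Fin d)) (C : Fin d → ℝ)
    (hΦ : AlmostAdditiveVec A Φ C) (C₁ C₂ : ℝ) (hC₁ : 0 < C₁) (hC₁₂ : C₁ ≤ C₂) :
    Tendsto (fun n : ℕ =>
        sSup {r : ℝ | ∃ l : ℕ, C₁ * n ≤ (l : ℝ) ∧ (l : ℝ) ≤ C₂ * n ∧ r = varN A (Φ l) l}
          / n) atTop (𝓝 0) ∧
    Tendsto (fun n : ℕ => varN A (Φ n) n / n) atTop (𝓝 0) :=
  statement2_general A Φ C hΦ C₁ C₂ hC₁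

end AlmostAdditivePaper
end

section
/- Let A ⊂ ℝ^d be a convex set and h : A → ℝ a bounded weakly concave function. Then h is lower semi-continuous at every local cone point of A. In particular, h is lower semi-continuous on ri(A) and on any closed interval (segment) I ⊂ A, and h is lower semi-continuous on all of A if A is a closed convex polyhedron. -/
open Filter Topology MeasureTheory Set
open scoped ENNReal NNReal

/-!
Near an `ε`-cone point `x` of `A`, every `y ∈ A` lies on a segment `[x, z]` with `z ∈ A`,
`‖z - x‖ = ε`, at parameter `t = ‖y - x‖ / ε`. Weak concavity applied to `z` and `x`, with the
weight chosen so that the distorted combination lands exactly at `y`, gives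
`h y ≥ h x - 4Mc²t`; hence `liminf h ≥ h x` at `x`.

Points of the relative interior are cone points thanks to a ball in the affine span. Every
point `x` of a polytope `conv F` (in particular of a segment) is a cone point by Carathéodory's
theorem for cones: each direction `y - x` is a nonnegative combination of a linearly independent
subfamily of `F - x`, and on each of these finitely many subfamilies the sum of the coefficients
is bounded by a constant times the norm of the combination.
-/

open AffineMap

section ConvexCombination

variable {X : Type*} [AddCommGroup X] [Module ℝ X]

theorem Convex.add_sum_smul_sub_mem {ι : Type*} {s : Set X} (hs : Convex ℝ s) {x : X}
    (hx : x ∈ s) {t : Finset ι} {p : ι → X} (hp : ∀ i ∈ t, p i ∈ s) {g : ι → ℝ}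
    (hg : ∀ i ∈ t, 0 ≤ g i) (hg₁ : ∑ i ∈ t, g i ≤ 1) :
    x + ∑ i ∈ t, g i • (p i - x) ∈ s := by
  rcases (Finset.sum_nonneg hg).eq_or_lt with hzero | hpos
  · have hg₀ : ∀ i ∈ t, g i = 0 := (Finset.sum_eq_zero_iff_of_nonneg hg).1 hzero.symm
    rw [Finset.sum_eq_zero fun i hi => by rw [hg₀ i hi, zero_smul], add_zero]
    exact hx
  · have hsum : ∑ i ∈ t, g i • (p i - x) = (∑ i ∈ t, g i) • (t.centerMass g p - x) := by
      rw [Finset.centerMass, smul_sub, smul_smul, mul_inv_cancel₀ hpos.ne', one_smul,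
        Finset.sum_smul]
      simp only [smul_sub, Finset.sum_sub_distrib]
    rw [hsum]
    exact hs.add_smul_sub_mem hx (hs.centerMass_mem hg hpos hp) ⟨hpos.le, hg₁⟩

/-- Carathéodory's theorem for cones. -/
theorem exists_linearIndepOn_nonneg_sum_eq {ι : Type*} [DecidableEq ι] (v : ι → X)
    (s : Finset ι) (f : ι → ℝ) (hf : ∀ i ∈ s, 0 ≤ f i) :
    ∃ t ⊆ s, ∃ g : ι → ℝ, LinearIndepOn ℝ v (t : Set ι) ∧ (∀ i ∈ t, 0 ≤ g i) ∧
      ∑ i ∈ t, g i • v i = ∑ i ∈ s, f i • v i := by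
  induction s using Finset.strongInduction generalizing f with
  | _ s ih =>
  by_cases hind : LinearIndepOn ℝ v (s : Set ι)
  · exact ⟨s, subset_rfl, f, hind, hf, rfl⟩
  obtain ⟨c, hc, i, his, hci⟩ := not_linearIndepOn_finset_iff.1 hind
  wlog hci_pos : 0 < c i generalizing c
  · exact this (-c) (by simp [neg_smul, hc]) (neg_ne_zero.2 hci)
      (neg_pos.2 (lt_of_le_of_ne (not_lt.1 hci_pos) hci))
  -- remove the generator that the relation `c` zeroes out first
  obtain ⟨j, hj, hj_min⟩ := Finset.exists_min_image {k ∈ s | 0 < c k} (fun k => f k / c k)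
    ⟨i, Finset.mem_filter.2 ⟨his, hci_pos⟩⟩
  obtain ⟨hjs, hcj⟩ := Finset.mem_filter.1 hj
  set r := f j / c j
  have hr : 0 ≤ r := div_nonneg (hf j hjs) hcj.le
  have hf' : ∀ k ∈ s.erase j, 0 ≤ f k - r * c k := by
    intro k hk
    have hks := Finset.mem_of_mem_erase hk
    rcases le_or_gt (c k) 0 with hck | hck
    · nlinarith [hf k hks]
    · have := hj_min k (Finset.mem_filter.2 ⟨hks, hck⟩)
      rw [le_div_iff₀ hck] at this
      linarith
  have hsum : ∑ k ∈ s.erase j, (f k - r * c k) • v k = ∑ k ∈ s, f k • v k := by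
    rw [Finset.sum_erase _ (by simp [r, hcj.ne'])]
    simp only [sub_smul, Finset.sum_sub_distrib, mul_smul, ← Finset.smul_sum, hc, smul_zero,
      sub_zero]
  obtain ⟨t, hts, g, hind', hg, hg_sum⟩ := ih _ (Finset.erase_ssubset hjs) _ hf'
  exact ⟨t, hts.trans (Finset.erase_subset _ _), g, hind', hg, hg_sum.trans hsum⟩

end ConvexCombination

section LinearIndependence

variable {X : Type*} [NormedAddCommGroup X] [NormedSpace ℝ X]

theorem LinearIndepOn.exists_sum_le_mul_norm {ι : Type*} {v : ι → X} {t : Finset ι}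
    (hv : LinearIndepOn ℝ v (t : Set ι)) :
    ∃ K, ∀ g : ι → ℝ, ∑ i ∈ t, g i ≤ K * ‖∑ i ∈ t, g i • v i‖ := by
  set φ := Fintype.linearCombination ℝ (fun i : ↥(t : Set ι) => v i)
  obtain ⟨K, -, hK⟩ := φ.exists_antilipschitzWith
    (LinearMap.ker_eq_bot.2 hv.linearIndependent.fintypeLinearCombination_injective)
  refine ⟨t.card * K, fun g => ?_⟩
  set u : ↥(t : Set ι) → ℝ := fun i => g i
  have hφ : φ u = ∑ i ∈ t, g i • v i := by
    simp [φ, u, Fintype.linearCombination_apply, ← Finset.sum_coe_sort t]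
  calc ∑ i ∈ t, g i = ∑ i : ↥(t : Set ι), u i := (Finset.sum_coe_sort t g).symm
    _ ≤ ∑ _i : ↥(t : Set ι), ‖u‖ := Finset.sum_le_sum fun i _ =>
        (le_abs_self _).trans (norm_le_pi_norm u i)
    _ = t.card * ‖u‖ := by simp
    _ ≤ t.card * (K * ‖φ u‖) := by gcongr; exact hK.le_mul_norm (map_zero φ) u
    _ = t.card * K * ‖∑ i ∈ t, g i • v i‖ := by rw [hφ, mul_assoc]

theorem exists_sum_le_mul_norm_of_linearIndepOn {ι : Type*} (v : ι → X) (s : Finset ι) :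
    ∃ K, 0 < K ∧ ∀ t ⊆ s, LinearIndepOn ℝ v (t : Set ι) →
      ∀ g : ι → ℝ, ∑ i ∈ t, g i ≤ K * ‖∑ i ∈ t, g i • v i‖ := by
  classical
  have hK : ∀ t : Finset ι, ∃ K, LinearIndepOn ℝ v (t : Set ι) →
      ∀ g : ι → ℝ, ∑ i ∈ t, g i ≤ K * ‖∑ i ∈ t, g i • v i‖ := by
    intro t
    by_cases ht : LinearIndepOn ℝ v (t : Set ι)
    · obtain ⟨K, hK⟩ := ht.exists_sum_le_mul_norm
      exact ⟨K, fun _ => hK⟩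
    · exact ⟨0, fun h => absurd h ht⟩
  choose K hK using hK
  refine ⟨∑ t ∈ s.powerset, |K t| + 1, by positivity, fun t hts ht g => ?_⟩
  have hKt : K t ≤ ∑ t ∈ s.powerset, |K t| + 1 :=
    calc K t ≤ |K t| := le_abs_self _
      _ ≤ ∑ t ∈ s.powerset, |K t| :=
          Finset.single_le_sum (f := fun t => |K t|) (fun _ _ => abs_nonneg _)
            (Finset.mem_powerset.2 hts)
      _ ≤ _ := le_add_of_nonneg_right zero_le_one
  exact (hK t ht g).trans (by gcongr)

end LinearIndependence

namespace AlmostAdditivePaper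

section WeakConcavity

variable {V : Type*} [AddCommGroup V] [Module ℝ V] {s t : Set V} {h : V → ℝ}

theorem WeaklyConcaveOn.mono (hst : s ⊆ t) (hwc : WeaklyConcaveOn t h) :
    WeaklyConcaveOn s h := by
  obtain ⟨c, hc, H⟩ := hwc
  exact ⟨c, hc, fun α hα β hβ => H α (hst hα) β (hst hβ)⟩

theorem inv_smul_weighted_eq_lineMap {γ₁ γ₂ t l : ℝ} (hγ₁ : 0 < γ₁) (hγ₂ : 0 < γ₂)
    (ht : t ∈ Ico (0 : ℝ) 1) (hl : l = t * γ₂ / (t * γ₂ + (1 - t) * γ₁)) (x z : V) :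
    (l * γ₁ + (1 - l) * γ₂)⁻¹ • ((l * γ₁) • z + ((1 - l) * γ₂) • x) = lineMap x z t := by
  have hD : 0 < t * γ₂ + (1 - t) * γ₁ :=
    add_pos_of_nonneg_of_pos (mul_nonneg ht.1 hγ₂.le) (mul_pos (sub_pos.2 ht.2) hγ₁)
  set k := γ₁ * γ₂ / (t * γ₂ + (1 - t) * γ₁)
  have hk : k ≠ 0 := by positivity
  have h₁ : l * γ₁ = t * k := by simp only [hl, k]; ring
  have h₂ : (1 - l) * γ₂ = (1 - t) * k := by simp only [hl, k]; field_simp; ring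
  rw [h₁, h₂, show t * k + (1 - t) * k = k by ring, smul_add, smul_smul, smul_smul,
    show k⁻¹ * (t * k) = t by field_simp, show k⁻¹ * ((1 - t) * k) = 1 - t by field_simp,
    lineMap_apply_module, add_comm]

theorem WeaklyConcaveOn.exists_sub_mul_le (hwc : WeaklyConcaveOn s h) {M : ℝ}
    (hM : ∀ x ∈ s, |h x| ≤ M) :
    ∃ K, ∀ x ∈ s, ∀ z ∈ s, ∀ t ∈ Icc (0 : ℝ) (1 / 2), h x - K * t ≤ h (lineMap x z t) := by
  obtain ⟨c, hc, hconc⟩ := hwc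
  refine ⟨4 * M * c ^ 2, fun x hx z hz t ht => ?_⟩
  obtain ⟨γ₁, hγ₁, γ₂, hγ₂, hineq⟩ := hconc z hz x hx
  have hγ₁0 : 0 < γ₁ := (inv_pos.2 (zero_lt_one.trans_le hc)).trans_le hγ₁.1
  have hγ₂0 : 0 < γ₂ := (inv_pos.2 (zero_lt_one.trans_le hc)).trans_le hγ₂.1
  set l := t * γ₂ / (t * γ₂ + (1 - t) * γ₁) with hl
  have hD : (2 * c)⁻¹ ≤ t * γ₂ + (1 - t) * γ₁ := by
    have : (2 * c)⁻¹ = 2⁻¹ * c⁻¹ := mul_inv 2 c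
    nlinarith [ht.1, ht.2, hγ₁.1]
  have hD0 : 0 < t * γ₂ + (1 - t) * γ₁ := (by positivity : (0 : ℝ) < (2 * c)⁻¹).trans_le hD
  have hl₀ : 0 ≤ l := div_nonneg (mul_nonneg ht.1 hγ₂0.le) hD0.le
  have hl₁ : l ≤ 1 := (div_le_one hD0).2 (by nlinarith [ht.2])
  -- `γ₂ ≤ c`, and the denominator is at least `1/(2c)` because `t ≤ 1/2` and `γ₁ ≥ 1/c`
  have hl_le : l ≤ 2 * c ^ 2 * t := by
    rw [hl, div_le_iff₀ hD0]
    calc t * γ₂ ≤ t * c := mul_le_mul_of_nonneg_left hγ₂.2 ht.1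
      _ = 2 * c ^ 2 * t * (2 * c)⁻¹ := by field_simp
      _ ≤ 2 * c ^ 2 * t * (t * γ₂ + (1 - t) * γ₁) := by
          gcongr
          exact mul_nonneg (by positivity) ht.1
  have hkey := hineq l ⟨hl₀, hl₁⟩
  rw [inv_smul_weighted_eq_lineMap hγ₁0 hγ₂0 ⟨ht.1, ht.2.trans_lt (by norm_num)⟩ hl] at hkey
  have hdiff : h x - h z ≤ 2 * M := by
    linarith [(abs_le.1 (hM x hx)).2, (abs_le.1 (hM z hz)).1]
  nlinarith [mul_le_mul_of_nonneg_left hdiff hl₀, mul_le_mul_of_nonneg_right hl_le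
    ((abs_nonneg _).trans (hM x hx))]

end WeakConcavity

section ConePoint

variable {X : Type*} [NormedAddCommGroup X] [NormedSpace ℝ X] {s : Set X} {x : X}

theorem IsConePoint.mem {ε : ℝ} (hx : IsConePoint s x ε) {y : X} (hy : y ∈ s)
    (hyx : y ≠ x) (hyε : ‖y - x‖ < ε) : x + (ε / ‖y - x‖) • (y - x) ∈ s :=
  hx y ⟨hy, mem_ball_iff_norm.2 hyε⟩ hyx (right_mem_segment ℝ _ _)

theorem lowerSemicontinuousWithinAt_of_isConePoint {h : X → ℝ} {ε K : ℝ} (hε : 0 < ε)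
    (hcone : IsConePoint s x ε)
    (hK : ∀ z ∈ s, ∀ t ∈ Icc (0 : ℝ) (1 / 2), h x - K * t ≤ h (lineMap x z t)) :
    LowerSemicontinuousWithinAt h s x := by
  have hlower : ∀ y ∈ s, ‖y - x‖ < ε / 2 → h x - K / ε * ‖y - x‖ ≤ h y := by
    intro y hy hyε
    rcases eq_or_ne y x with rfl | hyx
    · simp
    have hr : 0 < ‖y - x‖ := norm_pos_iff.2 (sub_ne_zero.2 hyx)
    have hline : lineMap x (x + (ε / ‖y - x‖) • (y - x)) (‖y - x‖ / ε) = y := by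
      rw [lineMap_apply_module', add_sub_cancel_left, smul_smul,
        show ‖y - x‖ / ε * (ε / ‖y - x‖) = 1 by field_simp, one_smul, sub_add_cancel]
    have := hK _ (hcone.mem hy hyx (by linarith)) (‖y - x‖ / ε)
      ⟨by positivity, by rw [div_le_iff₀ hε]; linarith⟩
    rw [hline] at this
    linarith [show K * (‖y - x‖ / ε) = K / ε * ‖y - x‖ by ring]
  have hcont : Tendsto (fun y => h x - K / ε * ‖y - x‖) (𝓝[s] x) (𝓝 (h x)) := by
    have : Continuous fun y => h x - K / ε * ‖y - x‖ := by fun_prop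
    simpa using (this.tendsto x).mono_left nhdsWithin_le_nhds
  intro b hb
  filter_upwards [hcont.eventually (lt_mem_nhds hb), self_mem_nhdsWithin,
    mem_nhdsWithin_of_mem_nhds (Metric.ball_mem_nhds x (half_pos hε))] with y hby hy hyε
  exact hby.trans_le (hlower y hy (mem_ball_iff_norm.1 hyε))

theorem WeaklyConcaveOn.lowerSemicontinuousWithinAt {h : X → ℝ} (hwc : WeaklyConcaveOn s h)
    (hbdd : ∃ M : ℝ, ∀ x ∈ s, |h x| ≤ M) (hx : x ∈ s) (hcone : IsLocalConePoint s x) :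
    LowerSemicontinuousWithinAt h s x := by
  obtain ⟨M, hM⟩ := hbdd
  obtain ⟨K, hK⟩ := hwc.exists_sub_mul_le hM
  obtain ⟨ε, hε, hε_cone⟩ := hcone
  exact lowerSemicontinuousWithinAt_of_isConePoint hε hε_cone (hK x hx)

theorem exists_ball_inter_affineSpan_subset_of_mem_intrinsicInterior
    (hx : x ∈ intrinsicInterior ℝ s) :
    ∃ ε > 0, Metric.ball x ε ∩ affineSpan ℝ s ⊆ s := by
  obtain ⟨y, hy, rfl⟩ := mem_intrinsicInterior.1 hx
  obtain ⟨ε, hε, hball⟩ := Metric.mem_nhds_iff.1 (mem_interior_iff_mem_nhds.1 hy)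
  exact ⟨ε, hε, fun z ⟨hzx, hz⟩ =>
    hball (show (⟨z, hz⟩ : affineSpan ℝ s) ∈ Metric.ball y ε from hzx)⟩

theorem isLocalConePoint_of_mem_intrinsicInterior (hx : x ∈ intrinsicInterior ℝ s) :
    IsLocalConePoint s x := by
  obtain ⟨ε, hε, hsub⟩ := exists_ball_inter_affineSpan_subset_of_mem_intrinsicInterior hx
  refine ⟨ε / 2, half_pos hε, fun y ⟨hy, _⟩ hyx => ?_⟩
  have hr : 0 < ‖y - x‖ := norm_pos_iff.2 (sub_ne_zero.2 hyx)
  have hxs : x ∈ affineSpan ℝ s := subset_affineSpan ℝ s (intrinsicInterior_subset hx)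
  have hz_span : x + (ε / 2 / ‖y - x‖) • (y - x) ∈ affineSpan ℝ s := by
    simpa [lineMap_apply_module', add_comm] using
      AffineMap.lineMap_mem (ε / 2 / ‖y - x‖) hxs (subset_affineSpan ℝ s hy)
  have hz_dist : x + (ε / 2 / ‖y - x‖) • (y - x) ∈ Metric.closedBall x (ε / 2) := by
    rw [mem_closedBall_iff_norm, add_sub_cancel_left, norm_smul, Real.norm_of_nonneg
      (by positivity), div_mul_cancel₀ _ hr.ne']
  intro q hq
  obtain ⟨hq_span, hq_dist⟩ :=
    ((affineSpan ℝ s).convex.inter (convex_closedBall x _)).segment_subset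
      ⟨hxs, Metric.mem_closedBall_self (half_pos hε).le⟩ ⟨hz_span, hz_dist⟩ hq
  exact hsub ⟨(Metric.mem_closedBall.1 hq_dist).trans_lt (half_lt_self hε), hq_span⟩

theorem isLocalConePoint_convexHull [FiniteDimensional ℝ X] (F : Finset X)
    (hx : x ∈ convexHull ℝ (F : Set X)) : IsLocalConePoint (convexHull ℝ (F : Set X)) x := by
  classical
  obtain ⟨K, hK0, hK⟩ := exists_sum_le_mul_norm_of_linearIndepOn (fun v => v - x) F
  refine ⟨K⁻¹, inv_pos.2 hK0, fun y ⟨hy, _⟩ hyx => ?_⟩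
  have hr : 0 < ‖y - x‖ := norm_pos_iff.2 (sub_ne_zero.2 hyx)
  refine (convex_convexHull ℝ _).segment_subset hx ?_
  obtain ⟨l, hl₀, hl₁, hly⟩ := Finset.mem_convexHull'.1 hy
  have hw : ∑ v ∈ F, (K⁻¹ / ‖y - x‖ * l v) • (v - x) = (K⁻¹ / ‖y - x‖) • (y - x) := by
    simp_rw [mul_smul, ← Finset.smul_sum, smul_sub, Finset.sum_sub_distrib, ← Finset.sum_smul,
      hl₁, one_smul, hly, smul_sub]
  obtain ⟨t, htF, g, hind, hg₀, hgw⟩ := exists_linearIndepOn_nonneg_sum_eq (fun v => v - x) F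
    (fun v => K⁻¹ / ‖y - x‖ * l v) fun v hv => mul_nonneg (by positivity) (hl₀ v hv)
  have hg₁ : ∑ v ∈ t, g v ≤ 1 :=
    calc ∑ v ∈ t, g v ≤ K * ‖∑ v ∈ t, g v • (v - x)‖ := hK t htF hind g
      _ = 1 := by
        rw [hgw, hw, norm_smul, Real.norm_of_nonneg (by positivity), div_mul_cancel₀ _ hr.ne',
          mul_inv_cancel₀ hK0.ne']
  have := (convex_convexHull ℝ _).add_sum_smul_sub_mem hx
    (fun v hv => subset_convexHull ℝ _ (htF hv)) hg₀ hg₁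
  rwa [hgw, hw] at this

end ConePoint

theorem statement8_general {d : ℕ} (A : Set (EuclideanSpace ℝ (Fin d)))
    (h : EuclideanSpace ℝ (Fin d) → ℝ) (hbdd : ∃ M : ℝ, ∀ x ∈ A, |h x| ≤ M)
    (hwc : WeaklyConcaveOn A h) :
    (∀ x ∈ A, IsLocalConePoint A x → LowerSemicontinuousWithinAt h A x) ∧
    (∀ x ∈ intrinsicInterior ℝ A, LowerSemicontinuousWithinAt h A x) ∧
    (∀ a b : EuclideanSpace ℝ (Fin d), segment ℝ a b ⊆ A →
      LowerSemicontinuousOn h (segment ℝ a b)) ∧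
    ((∃ F : Finset (EuclideanSpace ℝ (Fin d)), A = convexHull ℝ (F : Set _)) →
      LowerSemicontinuousOn h A) := by
  have hlsc : ∀ s ⊆ A, ∀ x ∈ s, IsLocalConePoint s x → LowerSemicontinuousWithinAt h s x :=
    fun s hsA x hx => (hwc.mono hsA).lowerSemicontinuousWithinAt
      (hbdd.imp fun M hM z hz => hM z (hsA hz)) hx
  refine ⟨hlsc A subset_rfl, fun x hx => ?_, fun a b hab x hx => ?_, ?_⟩
  · exact hlsc A subset_rfl x (intrinsicInterior_subset hx)
      (isLocalConePoint_of_mem_intrinsicInterior hx)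
  · rw [← convexHull_pair, ← Finset.coe_pair] at hab hx ⊢
    exact hlsc _ hab x hx (isLocalConePoint_convexHull _ hx)
  · rintro ⟨F, rfl⟩ x hx
    exact hlsc _ subset_rfl x hx (isLocalConePoint_convexHull F hx)

/-- A bounded weakly concave function on a convex set `A ⊆ ℝ^d` is
lower semi-continuous at every local cone point of `A`; in particular on `ri(A)`, on
every closed segment contained in `A`, and on all of `A` when `A` is a closed convex
polyhedron. -/
theorem statement8 {d : ℕ} (A : Set (EuclideanSpace ℝ (Fin d))) (hconv : Convex ℝ A)
    (h : EuclideanSpace ℝ (Fin d) → ℝ) (hbdd : ∃ M : ℝ, ∀ x ∈ A, |h x| ≤ M)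
    (hwc : WeaklyConcaveOn A h) :
    (∀ x ∈ A, IsLocalConePoint A x → LowerSemicontinuousWithinAt h A x) ∧
    (∀ x ∈ intrinsicInterior ℝ A, LowerSemicontinuousWithinAt h A x) ∧
    (∀ a b : EuclideanSpace ℝ (Fin d), segment ℝ a b ⊆ A →
      LowerSemicontinuousOn h (segment ℝ a b)) ∧
    ((∃ F : Finset (EuclideanSpace ℝ (Fin d)), A = convexHull ℝ (F : Set _)) →
      LowerSemicontinuousOn h A) :=
  statement8_general A h hbdd hwc

end AlmostAdditivePaper
end

section
/- Let (Σ_A, T) be a topologically mixing subshift of finite type, Ψ ∈ C_aa^−(Σ_A,T) and Φ ∈ C_aa(Σ_A,T,d); dimensions are computed in the metric space (Σ_A, d_Ψ). For any compact set Ω ⊂ L_Φ, the packing dimension of E_Φ(Ω) := ∪_{α∈Ω} E_Φ(α) satisfies dim_P E_Φ(Ω) ≤ sup{Λ(α) : α ∈ Ω}. In particular, for every α ∈ L_Φ, dim_H E_Φ(α) ≤ dim_P E_Φ(α) ≤ Λ(α). -/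
/-!
A `d_Ψ`-ball of radius `e^{-n}` is a cylinder `[x|_k]` with `k ≥ n / (-Ψ_min)`. Cover the compact
set `Ω` by finitely many balls `B(a, ε_a / 2)`, with `ε_a` chosen so that
`f(a, n, ε_a) ≤ e^{n (Λ(a) + δ)}` for large `n`. Every point of `E_Φ(Ω)` eventually has all its
averages `φ_j / j` within `ε_a` of one net point `a`, so the pieces of `E_Φ(Ω)` indexed by the time
`N` from which this holds are covered at scale `e^{-n}` by the cylinders counted in the
`f(a, n, ε_a)`. Their upper box dimension is thus at most `sup Λ + δ`, and so is the packing
dimension of `E_Φ(Ω)`. Mixing (with at least two symbols) makes the words of `B_n(Ψ)` of length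
`O(n)`, which keeps all these counts finite. Finally `dim_H ≤ dim_P`: if `s` exceeds the upper box
dimension of a piece, covers by fewer than `e^{k s'}` sets of diameter `e^{-k}` (`s' < s`) make
its `s`-Hausdorff measure vanish.
-/

open Filter Topology MeasureTheory Set
open scoped ENNReal NNReal

namespace AlmostAdditivePaper

variable {m : ℕ}

variable {E : Type*} [NormedAddCommGroup E] [NormedSpace ℝ E]

lemma natCast_le_exp_of_log_le {c : ℕ} {y : ℝ} (h : Real.log c ≤ y) : (c : ℝ) ≤ Real.exp y := by
  rcases Nat.eq_zero_or_pos c with rfl | hc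
  · simpa using (Real.exp_pos y).le
  · exact (Real.log_le_iff_le_exp (by exact_mod_cast hc)).mp h

section Dimension
variable {X : Type*} {ρ : X → X → ℝ}

lemma setDiam_le {U : Set X} {δ : ℝ} (h : ∀ x ∈ U, ∀ y ∈ U, ρ x y ≤ δ) :
    setDiam ρ U ≤ ENNReal.ofReal δ :=
  iSup₂_le fun x hx => iSup₂_le fun y hy => ENNReal.ofReal_le_ofReal (h x hx y hy)

@[simp] lemma setDiam_empty : setDiam ρ (∅ : Set X) = 0 := by
  simp [setDiam]

lemma exists_fin_cover {ι : Type*} {s : Set ι} (hs : s.Finite) {U : ι → Set X} {e : Set X}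
    {δ : ℝ} (hc : e ⊆ ⋃ i ∈ s, U i) (hd : ∀ i ∈ s, setDiam ρ (U i) ≤ ENNReal.ofReal δ) :
    ∃ V : Fin s.ncard → Set X, e ⊆ ⋃ i, V i ∧ ∀ i, setDiam ρ (V i) ≤ ENNReal.ofReal δ := by
  have := hs.to_subtype
  let idx : Fin s.ncard ≃ s := (Finite.equivFin s).symm
  refine ⟨fun i => U (idx i), fun x hx => ?_, fun i => hd _ (idx i).2⟩
  obtain ⟨i, hi, hxi⟩ := Set.mem_iUnion₂.mp (hc hx)
  exact Set.mem_iUnion.mpr ⟨idx.symm ⟨i, hi⟩, by simpa using hxi⟩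

lemma coverNum_le_ncard {ι : Type*} {s : Set ι} (hs : s.Finite) {U : ι → Set X} {e : Set X}
    {δ : ℝ} (hc : e ⊆ ⋃ i ∈ s, U i) (hd : ∀ i ∈ s, setDiam ρ (U i) ≤ ENNReal.ofReal δ) :
    coverNum ρ e δ ≤ s.ncard :=
  Nat.sInf_le (exists_fin_cover hs hc hd)

def TotallyBoundedD (ρ : X → X → ℝ) : Prop :=
  ∀ δ > 0, ∃ k, ∃ U : Fin k → Set X, Set.univ ⊆ ⋃ i, U i ∧
    ∀ i, setDiam ρ (U i) ≤ ENNReal.ofReal δ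

lemma uboxD_le_of_coverNum_le {e : Set X} {C s : ℝ}
    (h : ∀ᶠ n : ℕ in atTop, (coverNum ρ e (Real.exp (-n)) : ℝ) ≤ C * Real.exp (s * n)) :
    uboxD ρ e ≤ ENNReal.ofReal s := by
  have hlim : Tendsto (fun n : ℕ => ENNReal.ofReal (Real.log C / n + s)) atTop
      (𝓝 (ENNReal.ofReal s)) := by
    simpa [Function.comp_def] using (ENNReal.continuous_ofReal.tendsto _).comp
      ((tendsto_const_div_atTop_nhds_zero_nat (Real.log C)).add_const s)
  rw [uboxD, ← hlim.limsup_eq]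
  refine limsup_le_limsup ?_
  filter_upwards [h, eventually_gt_atTop 0] with n hn hn0
  set c := coverNum ρ e (Real.exp (-n))
  rcases Nat.eq_zero_or_pos c with hc | hc
  · simp [hc]
  have hC : 0 < C * Real.exp (s * n) := lt_of_lt_of_le (by exact_mod_cast hc) hn
  have hlog : Real.log c ≤ Real.log C + s * n := by
    rw [← Real.log_exp (s * n), ← Real.log_mul (pos_of_mul_pos_left hC (Real.exp_pos _).le).ne'
      (Real.exp_pos _).ne']
    exact Real.log_le_log (by exact_mod_cast hc) hn
  refine ENNReal.ofReal_le_ofReal ?_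
  rw [div_add' _ _ _ (by positivity)]
  exact div_le_div_of_nonneg_right hlog (Nat.cast_nonneg n)

lemma pdimD_eq_zero_of_subsingleton [Subsingleton X] (hρ : ∀ x, ρ x x = 0) (e : Set X) :
    pdimD ρ e = 0 := by
  have hcover : e ⊆ ⋃ _n : ℕ, Set.univ := fun x _ => Set.mem_iUnion.mpr ⟨0, Set.mem_univ x⟩
  refine le_antisymm ((iInf₂_le (fun _ => Set.univ) hcover).trans (iSup_le fun _ => ?_)) zero_le
  refine (uboxD_le_of_coverNum_le (C := 1) (s := 0) (.of_forall fun n => ?_)).trans (by simp)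
  have hcov : coverNum ρ Set.univ (Real.exp (-n)) ≤ (Set.univ : Set Unit).ncard :=
    coverNum_le_ncard Set.finite_univ (U := fun _ => Set.univ)
      (fun x _ => Set.mem_biUnion (Set.mem_univ ()) trivial) fun _ _ =>
      setDiam_le fun x _ y _ => by simp [Subsingleton.elim x y, hρ, (Real.exp_pos _).le]
  simpa using hcov

lemma hMeasD_eq_zero {e : Set X} {s : ℝ}
    (h : ∀ δ > 0, ∀ ε > (0 : ℝ≥0∞), ∃ U : ℕ → Set X, e ⊆ ⋃ n, U n ∧
      (∀ n, setDiam ρ (U n) ≤ ENNReal.ofReal δ) ∧ ∑' n, setDiam ρ (U n) ^ s ≤ ε) :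
    hMeasD ρ s e = 0 := by
  refine le_antisymm (iSup₂_le fun δ hδ => ENNReal.le_of_forall_pos_le_add fun ε hε _ => ?_)
    zero_le
  obtain ⟨U, hc, hd, hsum⟩ := h δ hδ ε (by exact_mod_cast hε)
  exact (iInf₂_le U hc).trans ((iInf_le _ hd).trans (by simpa using hsum))

lemma exists_cover_of_hMeasD_eq_zero {e : Set X} {s : ℝ} (h : hMeasD ρ s e = 0) {δ : ℝ}
    (hδ : 0 < δ) {ε : ℝ≥0∞} (hε : 0 < ε) :
    ∃ U : ℕ → Set X, e ⊆ ⋃ n, U n ∧ (∀ n, setDiam ρ (U n) ≤ ENNReal.ofReal δ) ∧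
      ∑' n, setDiam ρ (U n) ^ s < ε := by
  have hδε : (⨅ (U : ℕ → Set X) (_ : e ⊆ ⋃ n, U n)
      (_ : ∀ n, setDiam ρ (U n) ≤ ENNReal.ofReal δ), ∑' n, setDiam ρ (U n) ^ s) < ε := by
    refine lt_of_le_of_lt ?_ hε
    rw [← h, hMeasD]
    exact le_iSup₂_of_le δ hδ le_rfl
  simpa only [iInf_lt_iff, exists_prop] using hδε

lemma hMeasD_eq_zero_of_subset_iUnion {e : Set X} {s : ℝ} {F : ℕ → Set X}
    (hF : e ⊆ ⋃ n, F n) (h : ∀ n, hMeasD ρ s (F n) = 0) : hMeasD ρ s e = 0 := by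
  refine hMeasD_eq_zero fun δ hδ ε hε => ?_
  obtain ⟨ε', hε'pos, hε'sum⟩ := ENNReal.exists_pos_sum_of_countable hε.ne' ℕ
  choose U hUc hUd hUs using fun n =>
    exists_cover_of_hMeasD_eq_zero (h n) hδ (ENNReal.coe_pos.mpr (hε'pos n))
  let pairs : ℕ ≃ ℕ × ℕ := Nat.pairEquiv.symm
  refine ⟨fun k => U (pairs k).1 (pairs k).2, fun x hx => ?_, fun k => hUd _ _, ?_⟩
  · obtain ⟨n, hn⟩ := Set.mem_iUnion.mp (hF hx)
    obtain ⟨j, hj⟩ := Set.mem_iUnion.mp (hUc n hn)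
    exact Set.mem_iUnion.mpr ⟨pairs.symm (n, j), by simpa using hj⟩
  · calc ∑' k, setDiam ρ (U (pairs k).1 (pairs k).2) ^ s
        = ∑' p : ℕ × ℕ, setDiam ρ (U p.1 p.2) ^ s :=
          pairs.tsum_eq fun p => setDiam ρ (U p.1 p.2) ^ s
      _ = ∑' n, ∑' j, setDiam ρ (U n j) ^ s :=
          ENNReal.tsum_prod (f := fun n j => setDiam ρ (U n j) ^ s)
      _ ≤ ∑' n, (ε' n : ℝ≥0∞) := ENNReal.tsum_le_tsum fun n => (hUs n).le
      _ ≤ ε := hε'sum.le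

lemma exists_cover_coverNum (hρ : TotallyBoundedD ρ) (e : Set X) {δ : ℝ} (hδ : 0 < δ) :
    ∃ V : Fin (coverNum ρ e δ) → Set X, e ⊆ ⋃ i, V i ∧
      ∀ i, setDiam ρ (V i) ≤ ENNReal.ofReal δ := by
  obtain ⟨k, U, hU, hUd⟩ := hρ δ hδ
  exact Nat.sInf_mem (s := {j | ∃ V : Fin j → Set X, e ⊆ ⋃ i, V i ∧
    ∀ i, setDiam ρ (V i) ≤ ENNReal.ofReal δ}) ⟨k, U, (Set.subset_univ e).trans hU, hUd⟩

lemma exists_seq_cover_of_fin_cover {s : ℝ} (hs : 0 < s) {e : Set X} {k : ℕ} {r : ℝ≥0∞}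
    {V : Fin k → Set X} (hV : e ⊆ ⋃ i, V i) (hVr : ∀ i, setDiam ρ (V i) ≤ r) :
    ∃ U : ℕ → Set X, e ⊆ ⋃ n, U n ∧ (∀ n, setDiam ρ (U n) ≤ r) ∧
      ∑' n, setDiam ρ (U n) ^ s ≤ k * r ^ s := by
  refine ⟨fun n => if h : n < k then V ⟨n, h⟩ else ∅, fun x hx => ?_, fun n => ?_, ?_⟩
  · obtain ⟨i, hi⟩ := Set.mem_iUnion.mp (hV hx)
    exact Set.mem_iUnion.mpr ⟨i, by rwa [dif_pos i.2]⟩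
  · dsimp only
    split_ifs
    exacts [hVr _, by simp]
  · rw [tsum_eq_sum (s := Finset.range k) fun n hn => by
        simp only [dif_neg (Finset.mem_range.not.mp hn), setDiam_empty,
          ENNReal.zero_rpow_of_pos hs],
      ← Fin.sum_univ_eq_sum_range (fun n => setDiam ρ (if h : n < k then V ⟨n, h⟩ else ∅) ^ s)]
    simpa using Finset.sum_le_card_nsmul Finset.univ _ _ fun i _ =>
      ENNReal.rpow_le_rpow (hVr i) hs.le

/-- At a scale `e^{-k}` where fewer than `e^{k s'}` sets suffice, the `s`-sum of an optimal
cover is at most `e^{-k (s - s')}`. -/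
lemma hMeasD_eq_zero_of_uboxD_lt (hρ : TotallyBoundedD ρ) {e : Set X} {s s' : ℝ}
    (hub : uboxD ρ e < ENNReal.ofReal s') (hs' : s' < s) : hMeasD ρ s e = 0 := by
  have hs'pos : 0 < s' := ENNReal.ofReal_pos.mp (lt_of_le_of_lt zero_le hub)
  have hs : 0 < s := hs'pos.trans hs'
  have hexp : Tendsto (fun k : ℕ => Real.exp (-k)) atTop (𝓝 0) :=
    Real.tendsto_exp_atBot.comp (tendsto_neg_atTop_atBot.comp tendsto_natCast_atTop_atTop)
  have hdecay : Tendsto (fun k : ℕ => ENNReal.ofReal (Real.exp (-((s - s') * k)))) atTop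
      (𝓝 0) := by
    simpa [Function.comp_def] using (ENNReal.continuous_ofReal.tendsto _).comp
      (Real.tendsto_exp_atBot.comp (tendsto_neg_atTop_atBot.comp
        (tendsto_natCast_atTop_atTop.const_mul_atTop (sub_pos.mpr hs'))))
  refine hMeasD_eq_zero fun δ hδ ε hε => ?_
  obtain ⟨k, hk₁, hk₂, hk₃, hk₀⟩ := ((eventually_lt_of_limsup_lt hub).and
    ((hexp.eventually_le_const hδ).and
      ((hdecay.eventually_le_const hε).and (eventually_gt_atTop 0)))).exists
  set c := coverNum ρ e (Real.exp (-k))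
  have hc : (c : ℝ) ≤ Real.exp (s' * k) := by
    refine natCast_le_exp_of_log_le ?_
    have := (ENNReal.ofReal_lt_ofReal_iff hs'pos).mp hk₁
    rw [div_lt_iff₀ (by exact_mod_cast hk₀)] at this
    exact this.le
  obtain ⟨V, hVc, hVd⟩ := exists_cover_coverNum hρ e (Real.exp_pos (-k))
  obtain ⟨U, hUc, hUd, hUs⟩ := exists_seq_cover_of_fin_cover hs hVc hVd
  refine ⟨U, hUc, fun n => (hUd n).trans (ENNReal.ofReal_le_ofReal hk₂), hUs.trans ?_⟩
  calc (c : ℝ≥0∞) * ENNReal.ofReal (Real.exp (-k)) ^ s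
        = ENNReal.ofReal (c * Real.exp (-k * s)) := by
        rw [ENNReal.ofReal_rpow_of_pos (Real.exp_pos _), ← Real.exp_mul,
          ENNReal.ofReal_mul (by positivity), ENNReal.ofReal_natCast]
    _ ≤ ENNReal.ofReal (Real.exp (s' * k) * Real.exp (-k * s)) :=
        ENNReal.ofReal_le_ofReal (mul_le_mul_of_nonneg_right hc (Real.exp_pos _).le)
    _ = ENNReal.ofReal (Real.exp (-((s - s') * k))) := by rw [← Real.exp_add]; ring_nf
    _ ≤ ε := hk₃

lemma hdimD_le_pdimD (hρ : TotallyBoundedD ρ) (e : Set X) : hdimD ρ e ≤ pdimD ρ e := by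
  refine iSup₂_le fun s hs => le_iInf₂ fun F hF => ?_
  by_contra! hlt
  obtain ⟨c, hFc, hcs⟩ := exists_between hlt
  have hc : c ≠ ⊤ := hcs.ne_top
  have hnull : ∀ n, hMeasD ρ s (F n) = 0 := fun n =>
    hMeasD_eq_zero_of_uboxD_lt hρ
      ((le_iSup (fun n => uboxD ρ (F n)) n).trans_lt ((ENNReal.ofReal_toReal hc).symm ▸ hFc))
      (by simpa using (ENNReal.toReal_lt_toReal hc ENNReal.coe_ne_top).mpr hcs)
  exact ENNReal.top_ne_zero (hs ▸ hMeasD_eq_zero_of_subset_iUnion hF hnull)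

end Dimension

variable {A : Matrix (Fin m) (Fin m) ℕ}

instance inst_s9 : CompactSpace (Subshift A) := by
  refine isCompact_iff_compactSpace.mp
    (IsClosed.isCompact (s := {x : ℕ → Fin m | ∀ n, A (x n) (x (n + 1)) = 1}) ?_)
  simp only [Set.ofPred_forall]
  exact isClosed_iInter fun n =>
    isClosed_eq (f := (fun p : Fin m × Fin m => A p.1 p.2) ∘ fun x : ℕ → Fin m => (x n, x (n + 1)))
      (continuous_of_discreteTopology.comp (by fun_prop)) continuous_const

lemma isClosed_cyl (w : List (Fin m)) : IsClosed (cyl A w) := by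
  simp only [cyl, Set.ofPred_forall]
  exact isClosed_iInter fun i =>
    isClosed_eq ((continuous_apply _).comp continuous_subtype_val) continuous_const

@[simp] lemma length_wordPrefix (x : Subshift A) (k : ℕ) : (wordPrefix x k).length = k := by
  simp [wordPrefix]

lemma mem_cyl_wordPrefix {x y : Subshift A} {k : ℕ} :
    y ∈ cyl A (wordPrefix x k) ↔ ∀ i < k, y.1 i = x.1 i := by
  simp [cyl, wordPrefix, Fin.forall_iff]

lemma mem_cyl_wordPrefix_self (x : Subshift A) (k : ℕ) : x ∈ cyl A (wordPrefix x k) :=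
  mem_cyl_wordPrefix.mpr fun _ _ => rfl

lemma wordPrefix_eq_of_mem_cyl {x y : Subshift A} {k : ℕ} (h : y ∈ cyl A (wordPrefix x k)) :
    wordPrefix y k = wordPrefix x k :=
  congrArg List.ofFn (funext fun i => mem_cyl_wordPrefix.mp h i i.2)

lemma cyl_wordPrefix_antitone (x : Subshift A) : Antitone fun k => cyl A (wordPrefix x k) :=
  fun _ _ hkl _ hy =>
    mem_cyl_wordPrefix.mpr fun i hi => mem_cyl_wordPrefix.mp hy i (hi.trans_le hkl)

lemma eq_of_mem_cyl {w : List (Fin m)} {y z : Subshift A} (hy : y ∈ cyl A w) (hz : z ∈ cyl A w)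
    {i : ℕ} (hi : i < w.length) : y.1 i = z.1 i :=
  (hy ⟨i, hi⟩).trans (hz ⟨i, hi⟩).symm

section Potential
variable {Ψ : ℕ → Subshift A → ℝ} {CΨ : ℝ}

namespace AlmostAdditive

lemma bddAbove_range (hΨ : AlmostAdditive A Ψ CΨ) (n : ℕ) : BddAbove (Set.range (Ψ n)) :=
  (isCompact_range (hΨ.cont n)).bddAbove

lemma bddBelow_range (hΨ : AlmostAdditive A Ψ CΨ) (n : ℕ) : BddBelow (Set.range (Ψ n)) :=
  (isCompact_range (hΨ.cont n)).bddBelow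

lemma le_mul_phiMax (hΨ : AlmostAdditive A Ψ CΨ) (n : ℕ) (x : Subshift A) :
    Ψ n x ≤ n * PhiMax A Ψ CΨ := by
  induction n generalizing x with
  | zero => simp [hΨ.zero]
  | succ n ih =>
    have h₁ := hΨ.upper n 1 x
    have h₂ := le_csSup (hΨ.bddAbove_range 1) (Set.mem_range_self ((shiftT A)^[n] x))
    have h₃ := ih x
    simp only [PhiMax] at h₃ ⊢
    push_cast
    linarith

lemma mul_phiMin_le (hΨ : AlmostAdditive A Ψ CΨ) (n : ℕ) (x : Subshift A) :
    n * PhiMin A Ψ CΨ ≤ Ψ n x := by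
  induction n generalizing x with
  | zero => simp [hΨ.zero]
  | succ n ih =>
    have h₁ := hΨ.lower n 1 x
    have h₂ := csInf_le (hΨ.bddBelow_range 1) (Set.mem_range_self ((shiftT A)^[n] x))
    have h₃ := ih x
    simp only [PhiMin] at h₃ ⊢
    push_cast
    linarith

lemma phiMin_neg (hΨ : AlmostAdditive A Ψ CΨ) (hneg : PhiMax A Ψ CΨ < 0) :
    PhiMin A Ψ CΨ < 0 := by
  rcases isEmpty_or_nonempty (Subshift A) with h | ⟨⟨x⟩⟩
  · -- on an empty space `PhiMax = sSup ∅ + CΨ = CΨ > 0`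
    simp only [PhiMax, Set.range_eq_empty, Real.sSup_empty, zero_add] at hneg
    exact absurd hΨ.posC hneg.not_gt
  · have h₁ := hΨ.mul_phiMin_le 1 x
    have h₂ := hΨ.le_mul_phiMax 1 x
    simp only [Nat.cast_one, one_mul] at h₁ h₂
    linarith

end AlmostAdditive

lemma exp_le_wordSup (hΨ : AlmostAdditive A Ψ CΨ) {x y : Subshift A} {k : ℕ}
    (hy : y ∈ cyl A (wordPrefix x k)) : Real.exp (Ψ k y) ≤ wordSup A Ψ (wordPrefix x k) := by
  have := le_csSup ((isClosed_cyl (wordPrefix x k)).isCompact.image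
    (Real.continuous_exp.comp (hΨ.cont (wordPrefix x k).length))).bddAbove ⟨y, hy, rfl⟩
  simpa [wordSup] using this

lemma wordSup_nonneg (w : List (Fin m)) : 0 ≤ wordSup A Ψ w :=
  Real.sSup_nonneg (by rintro _ ⟨y, -, rfl⟩; positivity)

lemma wordSup_le_exp (hΨ : AlmostAdditive A Ψ CΨ) (w : List (Fin m)) :
    wordSup A Ψ w ≤ Real.exp (w.length * PhiMax A Ψ CΨ) :=
  Real.sSup_le (by rintro _ ⟨y, -, rfl⟩; exact Real.exp_le_exp.mpr (hΨ.le_mul_phiMax _ y))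
    (Real.exp_pos _).le

lemma exp_mul_phiMin_le_wordSup (hΨ : AlmostAdditive A Ψ CΨ) (x : Subshift A) (k : ℕ) :
    Real.exp (k * PhiMin A Ψ CΨ) ≤ wordSup A Ψ (wordPrefix x k) :=
  (Real.exp_le_exp.mpr (hΨ.mul_phiMin_le k x)).trans
    (exp_le_wordSup hΨ (mem_cyl_wordPrefix_self x k))

lemma wordSup_wordPrefix_antitone (hΨ : AlmostAdditive A Ψ CΨ) (hneg : PhiMax A Ψ CΨ < 0)
    (x : Subshift A) : Antitone fun k => wordSup A Ψ (wordPrefix x k) := by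
  refine antitone_nat_of_succ_le fun k => Real.sSup_le ?_ (wordSup_nonneg _)
  rintro _ ⟨y, hy, rfl⟩
  have h₁ := hΨ.upper k 1 y
  have h₂ := le_csSup (hΨ.bddAbove_range 1) (Set.mem_range_self ((shiftT A)^[k] y))
  have hdec : Ψ (k + 1) y ≤ Ψ k y := by rw [PhiMax] at hneg; linarith
  simpa using (Real.exp_le_exp.mpr hdec).trans
    (exp_le_wordSup hΨ (cyl_wordPrefix_antitone x k.le_succ hy))

end Potential

section Distance
variable {Ψ : ℕ → Subshift A → ℝ} {CΨ : ℝ}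

@[simp] lemma dPsi_self (x : Subshift A) : dPsi A Ψ x x = 0 := by
  simp [dPsi]

lemma exists_dPsi_eq_wordSup {x y : Subshift A} (h : x ≠ y) :
    ∃ j, y ∈ cyl A (wordPrefix x j) ∧ y.1 j ≠ x.1 j ∧
      dPsi A Ψ x y = wordSup A Ψ (wordPrefix x j) := by
  have hex : ∃ n, x.1 n ≠ y.1 n := by
    by_contra! hc
    exact h (Subtype.ext (funext hc))
  exact ⟨Nat.find hex, mem_cyl_wordPrefix.mpr fun i hi => (not_not.mp (Nat.find_min hex hi)).symm,
    Ne.symm (Nat.find_spec hex), by simp only [dPsi, dif_neg h]⟩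

lemma dPsi_le_of_mem_cyl (hΨ : AlmostAdditive A Ψ CΨ) (hneg : PhiMax A Ψ CΨ < 0)
    {x y : Subshift A} {k : ℕ} (hy : y ∈ cyl A (wordPrefix x k)) :
    dPsi A Ψ x y ≤ wordSup A Ψ (wordPrefix x k) := by
  rcases eq_or_ne x y with rfl | hxy
  · simpa using wordSup_nonneg _
  obtain ⟨j, -, hj, heq⟩ := exists_dPsi_eq_wordSup (Ψ := Ψ) hxy
  have hkj : k ≤ j := by
    by_contra! hjk
    exact hj (mem_cyl_wordPrefix.mp hy j hjk)
  exact heq ▸ wordSup_wordPrefix_antitone hΨ hneg x hkj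

lemma cyl_wordPrefix_eq_ballD (hΨ : AlmostAdditive A Ψ CΨ) (hneg : PhiMax A Ψ CΨ < 0)
    {x : Subshift A} {r : ℝ} {k : ℕ} (hk : wordSup A Ψ (wordPrefix x k) ≤ r)
    (hmin : ∀ j < k, r < wordSup A Ψ (wordPrefix x j)) :
    cyl A (wordPrefix x k) = ballD A Ψ x r := by
  refine Set.Subset.antisymm (fun y hy => (dPsi_le_of_mem_cyl hΨ hneg hy).trans hk) fun y hy => ?_
  rcases eq_or_ne x y with rfl | hxy
  · exact mem_cyl_wordPrefix_self x k
  obtain ⟨j, hyj, -, heq⟩ := exists_dPsi_eq_wordSup (Ψ := Ψ) hxy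
  have hkj : k ≤ j := by
    by_contra! hjk
    exact (hmin j hjk).not_ge (heq ▸ hy)
  exact cyl_wordPrefix_antitone x hkj hyj

lemma exists_cyl_wordPrefix_eq_ballD (hΨ : AlmostAdditive A Ψ CΨ) (hneg : PhiMax A Ψ CΨ < 0)
    (x : Subshift A) (t : ℝ) :
    ∃ k : ℕ, wordSup A Ψ (wordPrefix x k) ≤ Real.exp (-t) ∧
      cyl A (wordPrefix x k) = ballD A Ψ x (Real.exp (-t)) ∧ t ≤ k * -PhiMin A Ψ CΨ := by
  have hex : ∃ k : ℕ, wordSup A Ψ (wordPrefix x k) ≤ Real.exp (-t) := by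
    refine ⟨⌈t / -PhiMax A Ψ CΨ⌉₊, (wordSup_le_exp hΨ _).trans (Real.exp_le_exp.mpr ?_)⟩
    have := (div_le_iff₀ (neg_pos.mpr hneg)).mp (Nat.le_ceil (t / -PhiMax A Ψ CΨ))
    simp only [length_wordPrefix]
    linarith
  refine ⟨Nat.find hex, Nat.find_spec hex,
    cyl_wordPrefix_eq_ballD hΨ hneg (Nat.find_spec hex) fun j hj => not_le.mp (Nat.find_min hex hj),
    ?_⟩
  have := Real.exp_le_exp.mp ((exp_mul_phiMin_le_wordSup hΨ x _).trans (Nat.find_spec hex))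
  linarith

end Distance

section Cylinders
variable {Ψ : ℕ → Subshift A → ℝ} {CΨ : ℝ}

lemma setDiam_cyl_wordPrefix_le (hΨ : AlmostAdditive A Ψ CΨ) (hneg : PhiMax A Ψ CΨ < 0)
    (x : Subshift A) (k : ℕ) :
    setDiam (dPsi A Ψ) (cyl A (wordPrefix x k)) ≤ ENNReal.ofReal (wordSup A Ψ (wordPrefix x k)) :=
  setDiam_le fun y hy z hz => by
    rw [← wordPrefix_eq_of_mem_cyl hy] at hz ⊢
    exact dPsi_le_of_mem_cyl hΨ hneg hz

lemma setDiam_cyl_le_of_mem_Bn (hΨ : AlmostAdditive A Ψ CΨ) (hneg : PhiMax A Ψ CΨ < 0)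
    {t : ℝ} {w : List (Fin m)} (hw : w ∈ Bn A Ψ t) :
    setDiam (dPsi A Ψ) (cyl A w) ≤ ENNReal.ofReal (Real.exp (-t)) := by
  obtain ⟨x, hx⟩ := hw
  obtain ⟨k, hk, hball, -⟩ := exists_cyl_wordPrefix_eq_ballD hΨ hneg x t
  rw [hx, ← hball]
  exact (setDiam_cyl_wordPrefix_le hΨ hneg x k).trans (ENNReal.ofReal_le_ofReal hk)

lemma totallyBoundedD_dPsi (hΨ : AlmostAdditive A Ψ CΨ) (hneg : PhiMax A Ψ CΨ < 0) :
    TotallyBoundedD (dPsi A Ψ) := by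
  intro δ hδ
  obtain ⟨L, hL⟩ := ((Real.tendsto_exp_atBot.comp
    (tendsto_natCast_atTop_atTop.atTop_mul_const_of_neg hneg)).eventually_le_const hδ).exists
  have hfin : (Set.range fun x : Subshift A => wordPrefix x L).Finite :=
    (List.finite_length_eq (Fin m) L).subset (by rintro _ ⟨x, rfl⟩; simp)
  refine ⟨_, exists_fin_cover hfin (U := cyl A)
    (fun x _ => Set.mem_biUnion ⟨x, rfl⟩ (mem_cyl_wordPrefix_self x L)) ?_⟩
  rintro _ ⟨x, rfl⟩
  exact (setDiam_cyl_wordPrefix_le hΨ hneg x L).trans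
    (ENNReal.ofReal_le_ofReal ((wordSup_le_exp hΨ _).trans (by simpa using hL)))

end Cylinders

lemma exists_ne_zero_of_pow_succ_pos {p : ℕ} {a b : Fin m} (h : 0 < (A ^ (p + 1)) a b) :
    ∃ k, A a k ≠ 0 ∧ 0 < (A ^ p) k b := by
  rw [pow_succ', Matrix.mul_apply] at h
  obtain ⟨k, -, hk⟩ := Finset.exists_ne_zero_of_sum_ne_zero h.ne'
  exact ⟨k, left_ne_zero_of_mul hk, Nat.pos_of_ne_zero (right_ne_zero_of_mul hk)⟩

namespace Mixing

lemma eq_one_of_ne_zero (hA : Mixing A) {a b : Fin m} (h : A a b ≠ 0) : A a b = 1 :=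
  (hA.1 a b).resolve_left h

lemma exists_point (hA : Mixing A) (a : Fin m) : ∃ y : Subshift A, y.1 0 = a := by
  obtain ⟨p, hp, hpos⟩ := hA.2
  have hsucc : ∀ a, ∃ b, A a b = 1 := fun a => by
    obtain ⟨b, hb, -⟩ := exists_ne_zero_of_pow_succ_pos (p := p - 1) (b := a)
      (by rw [Nat.sub_add_cancel hp]; exact hpos a a)
    exact ⟨b, hA.eq_one_of_ne_zero hb⟩
  choose f hf using hsucc
  exact ⟨⟨fun n => f^[n] a, fun n => by
    simpa only [Function.iterate_succ_apply'] using hf (f^[n] a)⟩, rfl⟩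

lemma exists_point_of_pow_pos (hA : Mixing A) {p : ℕ} :
    ∀ {a b : Fin m}, 0 < (A ^ p) a b → ∃ y : Subshift A, y.1 0 = a ∧ y.1 p = b := by
  induction p with
  | zero =>
    intro a b h
    obtain rfl : a = b := by
      by_contra hab
      simp [Matrix.one_apply_ne hab] at h
    obtain ⟨y, hy⟩ := hA.exists_point a
    exact ⟨y, hy, hy⟩
  | succ p ih =>
    intro a b h
    obtain ⟨k, hak, hkb⟩ := exists_ne_zero_of_pow_succ_pos h
    obtain ⟨y, hy0, hyp⟩ := ih hkb
    refine ⟨⟨fun n => n.casesOn a y.1, fun n => ?_⟩, rfl, hyp⟩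
    cases n with
    | zero => simpa [hy0] using hA.eq_one_of_ne_zero hak
    | succ n => exact y.2 n

lemma exists_branch (hA : Mixing A) (hm : 2 ≤ m) :
    ∃ p : ℕ, ∀ (z : Subshift A) (j : ℕ),
      ∃ y ∈ cyl A (wordPrefix z j), y.1 (j + p) ≠ z.1 (j + p) := by
  obtain ⟨p, -, hpos⟩ := hA.2
  refine ⟨p, fun z j => ?_⟩
  have : Nontrivial (Fin m) := Fin.nontrivial_iff_two_le.mpr hm
  obtain ⟨b, hb⟩ := exists_ne (z.1 (j + p))
  obtain ⟨y, hy0, hyp⟩ := hA.exists_point_of_pow_pos (hpos (z.1 j) b)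
  refine ⟨⟨fun n => if n < j then z.1 n else y.1 (n - j), fun n => ?_⟩,
    mem_cyl_wordPrefix.mpr fun i hi => if_pos hi, by simpa [hyp] using hb⟩
  by_cases hn : n + 1 < j
  · simpa [hn, (Nat.lt_succ_self n).trans hn] using z.2 n
  by_cases hnj : n < j
  · obtain rfl : n + 1 = j := by omega
    simpa [hnj, hy0] using z.2 n
  · have : n + 1 - j = n - j + 1 := by omega
    simpa [hn, hnj, this] using y.2 (n - j)

end Mixing

lemma length_le_of_mem_Bn {Ψ : ℕ → Subshift A → ℝ} {CΨ : ℝ} (hΨ : AlmostAdditive A Ψ CΨ)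
    (hneg : PhiMax A Ψ CΨ < 0) {p : ℕ}
    (hbranch : ∀ (z : Subshift A) (j : ℕ),
      ∃ y ∈ cyl A (wordPrefix z j), y.1 (j + p) ≠ z.1 (j + p))
    {t : ℝ} {j : ℕ} (hj : j * PhiMax A Ψ CΨ ≤ -t) {w : List (Fin m)} (hw : w ∈ Bn A Ψ t) :
    w.length ≤ j + p := by
  obtain ⟨z, hz⟩ := hw
  -- `[w]` is a ball containing `[z|_j]`, hence the point `y` that leaves `z` at time `j + p`
  obtain ⟨y, hyj, hy⟩ := hbranch z j
  have hzw : z ∈ cyl A w := hz ▸ show dPsi A Ψ z z ≤ _ by simp [(Real.exp_pos _).le]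
  have hyw : y ∈ cyl A w := hz ▸ (dPsi_le_of_mem_cyl hΨ hneg hyj).trans
    ((wordSup_le_exp hΨ _).trans (by simpa using hj))
  by_contra! hlt
  exact hy (eq_of_mem_cyl hyw hzw hlt)

lemma encard_setOf_length_le_le (α : Type*) [Fintype α] (L : ℕ) :
    {w : List α | w.length ≤ L}.encard ≤ ((Fintype.card α + 1) ^ (L + 1) : ℕ) := by
  calc {w : List α | w.length ≤ L}.encard ≤ (Set.univ : Set (Fin (L + 1) → Option α)).encard :=
        Set.encard_le_encard_of_injOn (f := fun w i => w[(i : ℕ)]?) (Set.mapsTo_univ _ _)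
          fun u hu v hv huv => List.ext_getElem? fun n => ?_
    _ = _ := by simp [Set.encard_univ]
  rcases lt_or_ge n (L + 1) with hn | hn
  · exact congrFun huv ⟨n, hn⟩
  · have hu' : u.length ≤ n := (Set.mem_ofPred.mp hu).trans (by omega)
    have hv' : v.length ≤ n := (Set.mem_ofPred.mp hv).trans (by omega)
    rw [List.getElem?_eq_none hu', List.getElem?_eq_none hv']

/-- Stated with `encard`, so that it includes the finiteness of `B_n(Ψ)`: `fcard` is a
`Nat.card`, which vanishes on infinite sets. -/
def ExpGrowthBn (A : Matrix (Fin m) (Fin m) ℕ) (Ψ : ℕ → Subshift A → ℝ) (M : ℕ) : Prop :=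
  ∀ n : ℕ, (Bn A Ψ n).encard ≤ (M ^ (n + 1) : ℕ)

theorem Mixing.exists_expGrowthBn {Ψ : ℕ → Subshift A → ℝ} {CΨ : ℝ} (hA : Mixing A) (hm : 2 ≤ m)
    (hΨ : AlmostAdditive A Ψ CΨ) (hneg : PhiMax A Ψ CΨ < 0) : ∃ M, ExpGrowthBn A Ψ M := by
  obtain ⟨p, hp⟩ := hA.exists_branch hm
  set q := ⌈(-PhiMax A Ψ CΨ)⁻¹⌉₊
  have hq : 1 ≤ (q : ℝ) * -PhiMax A Ψ CΨ :=
    calc 1 = (-PhiMax A Ψ CΨ)⁻¹ * -PhiMax A Ψ CΨ := (inv_mul_cancel₀ (by linarith)).symm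
      _ ≤ q * -PhiMax A Ψ CΨ := mul_le_mul_of_nonneg_right (Nat.le_ceil _) (by linarith)
  refine ⟨(m + 1) ^ (q + p + 1), fun n => ?_⟩
  have hlen : Bn A Ψ n ⊆ {w | w.length ≤ n * q + p} := fun w hw =>
    length_le_of_mem_Bn hΨ hneg hp (j := n * q)
      (by push_cast; nlinarith [(n.cast_nonneg : (0 : ℝ) ≤ n)]) hw
  calc (Bn A Ψ n).encard ≤ {w : List (Fin m) | w.length ≤ n * q + p}.encard :=
        Set.encard_le_encard hlen
    _ ≤ ((m + 1) ^ (n * q + p + 1) : ℕ) := by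
        simpa using encard_setOf_length_le_le (Fin m) (n * q + p)
    _ ≤ (((m + 1) ^ (q + p + 1)) ^ (n + 1) : ℕ) := by
        rw [← pow_mul]
        exact_mod_cast Nat.pow_le_pow_right (by omega) (by nlinarith)

lemma log_natCast_le_log_natCast {a b : ℕ} (h : a ≤ b) : Real.log a ≤ Real.log b := by
  rcases a.eq_zero_or_pos with rfl | ha
  · simpa using Real.log_natCast_nonneg b
  · exact Real.log_le_log (by exact_mod_cast ha) (by exact_mod_cast h)

section LargeDeviations
variable {Φ : ℕ → Subshift A → E} {Ψ : ℕ → Subshift A → ℝ} {M : ℕ}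

noncomputable def fRate (A : Matrix (Fin m) (Fin m) ℕ) (Φ : ℕ → Subshift A → E)
    (Ψ : ℕ → Subshift A → ℝ) (α : E) (ε : ℝ) : ℝ :=
  limsup (fun n : ℕ => Real.log (fcard A Φ Ψ α n ε) / n) atTop

lemma Fset_finite (hB : ExpGrowthBn A Ψ M) (α : E) (n : ℕ) (ε : ℝ) :
    (Fset A Φ Ψ α n ε).Finite :=
  Set.finite_of_encard_le_coe ((Set.encard_le_encard fun _ hu => hu.1).trans (hB n))

lemma fcard_le (hB : ExpGrowthBn A Ψ M) (α : E) (n : ℕ) (ε : ℝ) :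
    fcard A Φ Ψ α n ε ≤ M ^ (n + 1) :=
  ENat.toNat_le_of_le_natCast ((Set.encard_le_encard fun _ hu => hu.1).trans (hB n))

lemma fcard_mono (hB : ExpGrowthBn A Ψ M) (α : E) (n : ℕ) : Monotone (fcard A Φ Ψ α n) :=
  fun _ ε' h => Nat.card_mono (Fset_finite hB α n ε')
    fun _ ⟨hu, x, hx, hxε⟩ => ⟨hu, x, hx, hxε.trans_le h⟩

lemma log_fcard_div_le (hB : ExpGrowthBn A Ψ M) (α : E) (ε : ℝ) (n : ℕ) :
    Real.log (fcard A Φ Ψ α n ε) / n ≤ 2 * Real.log M := by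
  have hM := Real.log_natCast_nonneg M
  rcases n.eq_zero_or_pos with rfl | hn
  · simpa using hM
  have hn' : (1 : ℝ) ≤ n := by exact_mod_cast hn
  rw [div_le_iff₀ (by positivity)]
  calc Real.log (fcard A Φ Ψ α n ε) ≤ Real.log ((M ^ (n + 1) : ℕ) : ℝ) :=
        log_natCast_le_log_natCast (fcard_le hB α n ε)
    _ = (n + 1) * Real.log M := by push_cast; rw [Real.log_pow]; push_cast; ring
    _ ≤ 2 * Real.log M * n := by nlinarith

lemma isBoundedUnder_log_fcard (hB : ExpGrowthBn A Ψ M) (α : E) (ε : ℝ) :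
    IsBoundedUnder (· ≤ ·) atTop fun n : ℕ => Real.log (fcard A Φ Ψ α n ε) / n :=
  isBoundedUnder_of ⟨_, log_fcard_div_le hB α ε⟩

lemma isCoboundedUnder_log_fcard (α : E) (ε : ℝ) :
    IsCoboundedUnder (· ≤ ·) atTop fun n : ℕ => Real.log (fcard A Φ Ψ α n ε) / n :=
  IsBoundedUnder.isCoboundedUnder_le
    (isBoundedUnder_of ⟨0, fun n => div_nonneg (Real.log_natCast_nonneg _) n.cast_nonneg⟩)

lemma fRate_mono (hB : ExpGrowthBn A Ψ M) (α : E) : Monotone (fRate A Φ Ψ α) := fun ε ε' h =>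
  limsup_le_limsup (.of_forall fun n => div_le_div_of_nonneg_right
      (log_natCast_le_log_natCast (fcard_mono hB α n h)) n.cast_nonneg)
    (isCoboundedUnder_log_fcard α ε) (isBoundedUnder_log_fcard hB α ε')

lemma tendsto_fRate (hB : ExpGrowthBn A Ψ M) (α : E) :
    Tendsto (fRate A Φ Ψ α) (𝓝[>] 0) (𝓝 (LambdaD A Φ Ψ α)) := by
  have h := (fRate_mono (Φ := Φ) hB α).tendsto_nhdsGT 0
  rwa [show LambdaD A Φ Ψ α = _ from h.limUnder_eq]

lemma lambdaD_le (hB : ExpGrowthBn A Ψ M) (α : E) : LambdaD A Φ Ψ α ≤ 2 * Real.log M :=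
  le_of_tendsto (tendsto_fRate hB α) (.of_forall fun ε =>
    limsup_le_of_le (isCoboundedUnder_log_fcard α ε) (.of_forall (log_fcard_div_le hB α ε)))

lemma exists_eventually_fcard_le (hB : ExpGrowthBn A Ψ M) (α : E) {s : ℝ}
    (hs : LambdaD A Φ Ψ α < s) :
    ∃ ε > 0, ∀ᶠ n : ℕ in atTop, (fcard A Φ Ψ α n ε : ℝ) ≤ Real.exp (s * n) := by
  obtain ⟨ε, hε, hεpos⟩ :=
    (((tendsto_fRate hB α).eventually (gt_mem_nhds hs)).and self_mem_nhdsWithin).exists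
  refine ⟨ε, hεpos, ?_⟩
  filter_upwards [eventually_lt_of_limsup_lt hε (isBoundedUnder_log_fcard hB α ε),
    eventually_gt_atTop 0] with n hn hn0
  rw [div_lt_iff₀ (by exact_mod_cast hn0)] at hn
  exact natCast_le_exp_of_log_le hn.le

end LargeDeviations

section Covering
variable {Φ : ℕ → Subshift A → E} {Ψ : ℕ → Subshift A → ℝ} {CΨ : ℝ} {M : ℕ}

def nearSet (Φ : ℕ → Subshift A → E) (t : Finset E) (r : E → ℝ) (N : ℕ) : Set (Subshift A) :=
  {x | ∀ j ≥ N, ∃ a ∈ t, ‖(j : ℝ)⁻¹ • Φ j x - a‖ < r a}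

lemma iUnion_EPhi_subset_iUnion_nearSet {Ω : Set E} {t : Finset E} {r : E → ℝ}
    (hΩ : Ω ⊆ ⋃ a ∈ t, Metric.ball a (r a / 2)) :
    (⋃ α ∈ Ω, EPhi A Φ α) ⊆ ⋃ N, nearSet Φ t r N := by
  intro x hx
  obtain ⟨α, hαΩ, hxα⟩ := Set.mem_iUnion₂.mp hx
  obtain ⟨a, hat, hαa⟩ := Set.mem_iUnion₂.mp (hΩ hαΩ)
  obtain ⟨N, hN⟩ := Metric.tendsto_atTop.mp hxα _ (dist_nonneg.trans_lt hαa)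
  refine Set.mem_iUnion.mpr ⟨N, fun j hj => ⟨a, hat, ?_⟩⟩
  calc ‖(j : ℝ)⁻¹ • Φ j x - a‖ ≤ dist ((j : ℝ)⁻¹ • Φ j x) α + dist α a := by
        rw [← dist_eq_norm]
        exact dist_triangle _ _ _
    _ < r a / 2 + r a / 2 := add_lt_add (hN j hj) hαa
    _ = r a := add_halves _

/-- Each point of `nearSet Φ t r N` lies in a ball of radius `e^{-n}` that is a cylinder of
length at least `N` once `n ≥ N (-Ψ_min)`, so its word is counted by some `f(a, n, r a)`. -/
lemma coverNum_nearSet_le (hΨ : AlmostAdditive A Ψ CΨ) (hneg : PhiMax A Ψ CΨ < 0)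
    (hB : ExpGrowthBn A Ψ M) (t : Finset E) (r : E → ℝ) {N n : ℕ}
    (hn : N * -PhiMin A Ψ CΨ ≤ n) :
    coverNum (dPsi A Ψ) (nearSet Φ t r N) (Real.exp (-n)) ≤ ∑ a ∈ t, fcard A Φ Ψ a n (r a) := by
  have hW : (⋃ a ∈ t, Fset A Φ Ψ a n (r a)).Finite :=
    t.finite_toSet.biUnion fun a _ => Fset_finite hB a n (r a)
  refine (coverNum_le_ncard hW (U := cyl A) (fun x hx => ?_) fun w hw => ?_).trans
    (t.set_ncard_biUnion_le _)
  · obtain ⟨k, -, hball, hk⟩ := exists_cyl_wordPrefix_eq_ballD hΨ hneg x n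
    have hNk : N ≤ k := by
      exact_mod_cast le_of_mul_le_mul_right (hn.trans hk) (neg_pos.mpr (hΨ.phiMin_neg hneg))
    obtain ⟨a, hat, ha⟩ := hx k hNk
    exact Set.mem_biUnion (Set.mem_biUnion hat ⟨⟨x, hball⟩, x, mem_cyl_wordPrefix_self x k,
      by simpa using ha⟩) (mem_cyl_wordPrefix_self x k)
  · obtain ⟨a, -, hwa⟩ := Set.mem_iUnion₂.mp hw
    exact setDiam_cyl_le_of_mem_Bn hΨ hneg hwa.1

lemma pdimD_iUnion_EPhi_le (hΨ : AlmostAdditive A Ψ CΨ) (hneg : PhiMax A Ψ CΨ < 0)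
    (hB : ExpGrowthBn A Ψ M) {Ω : Set E} (hΩ : IsCompact Ω) :
    pdimD (dPsi A Ψ) (⋃ α ∈ Ω, EPhi A Φ α) ≤
      ENNReal.ofReal (sSup {r : ℝ | ∃ α ∈ Ω, r = LambdaD A Φ Ψ α}) := by
  set S := sSup {r : ℝ | ∃ α ∈ Ω, r = LambdaD A Φ Ψ α}
  have hS : ∀ α ∈ Ω, LambdaD A Φ Ψ α ≤ S := fun α hα =>
    le_csSup ⟨2 * Real.log M, by rintro _ ⟨β, -, rfl⟩; exact lambdaD_le hB β⟩ ⟨α, hα, rfl⟩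
  refine ENNReal.le_of_forall_pos_le_add fun δ hδ _ => ?_
  choose! r hr hfcard using fun α hα =>
    exists_eventually_fcard_le (Φ := Φ) hB α ((hS α hα).trans_lt (lt_add_of_pos_right S hδ))
  obtain ⟨t, htΩ, hcov⟩ := hΩ.elim_nhds_subcover (fun a => Metric.ball a (r a / 2))
    fun a ha => Metric.ball_mem_nhds a (half_pos (hr a ha))
  refine (iInf₂_le (nearSet Φ t r) (iUnion_EPhi_subset_iUnion_nearSet hcov)).trans
    (iSup_le fun N => ?_)
  refine (uboxD_le_of_coverNum_le (C := t.card) (s := S + δ) ?_).trans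
    (ENNReal.ofReal_add_le.trans (by rw [ENNReal.ofReal_coe_nnreal]))
  filter_upwards [(eventually_all_finset t).mpr fun a ha => hfcard a (htΩ a ha),
    eventually_ge_atTop ⌈N * -PhiMin A Ψ CΨ⌉₊] with n hfc hn
  calc (coverNum (dPsi A Ψ) (nearSet Φ t r N) (Real.exp (-n)) : ℝ)
      ≤ ∑ a ∈ t, (fcard A Φ Ψ a n (r a) : ℝ) := by
        exact_mod_cast coverNum_nearSet_le hΨ hneg hB t r (Nat.ceil_le.mp hn)
    _ ≤ ∑ _a ∈ t, Real.exp ((S + δ) * n) := Finset.sum_le_sum hfc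
    _ = t.card * Real.exp ((S + δ) * n) := by simp

end Covering

theorem statement9_general {m d : ℕ} (A : Matrix (Fin m) (Fin m) ℕ) (hA : Mixing A)
    (Ψ : ℕ → Subshift A → ℝ) (CΨ : ℝ) (hΨ : AlmostAdditive A Ψ CΨ)
    (hneg : PhiMax A Ψ CΨ < 0)
    (Φ : ℕ → Subshift A → EuclideanSpace ℝ (Fin d)) :
    (∀ Ω : Set (EuclideanSpace ℝ (Fin d)), IsCompact Ω → Ω ⊆ LPhi A Φ →
      pdimD (dPsi A Ψ) (⋃ α ∈ Ω, EPhi A Φ α) ≤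
        ENNReal.ofReal (sSup {r : ℝ | ∃ α ∈ Ω, r = LambdaD A Φ Ψ α})) ∧
    (∀ α ∈ LPhi A Φ,
      hdimD (dPsi A Ψ) (EPhi A Φ α) ≤ pdimD (dPsi A Ψ) (EPhi A Φ α) ∧
      pdimD (dPsi A Ψ) (EPhi A Φ α) ≤ ENNReal.ofReal (LambdaD A Φ Ψ α)) := by
  have hupper : ∀ Ω, IsCompact Ω → pdimD (dPsi A Ψ) (⋃ α ∈ Ω, EPhi A Φ α) ≤
      ENNReal.ofReal (sSup {r : ℝ | ∃ α ∈ Ω, r = LambdaD A Φ Ψ α}) := by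
    intro Ω hΩ
    rcases lt_or_ge m 2 with hm | hm
    · -- `Σ_A` has at most one point: `B_n(Ψ)` may be infinite, but packing dimensions vanish
      have : Subsingleton (Fin m) := Fin.subsingleton_iff_le_one.mpr (by omega)
      rw [pdimD_eq_zero_of_subsingleton dPsi_self]
      exact zero_le
    · obtain ⟨M, hM⟩ := hA.exists_expGrowthBn hm hΨ hneg
      exact pdimD_iUnion_EPhi_le hΨ hneg hM hΩ
  refine ⟨fun Ω hΩ _ => hupper Ω hΩ,
    fun α _ => ⟨hdimD_le_pdimD (totallyBoundedD_dPsi hΨ hneg) _, ?_⟩⟩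
  simpa [csSup_singleton] using hupper {α} isCompact_singleton

/-- Upper bound: for compact `Ω ⊆ L_Φ`,
`dim_P E_Φ(Ω) ≤ sup {Λ(α) : α ∈ Ω}`; in particular
`dim_H E_Φ(α) ≤ dim_P E_Φ(α) ≤ Λ(α)` for `α ∈ L_Φ`. -/
theorem statement9 {m d : ℕ} (hm : 0 < m) (A : Matrix (Fin m) (Fin m) ℕ) (hA : Mixing A)
    (Ψ : ℕ → Subshift A → ℝ) (CΨ : ℝ) (hΨ : AlmostAdditive A Ψ CΨ)
    (hneg : PhiMax A Ψ CΨ < 0)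
    (Φ : ℕ → Subshift A → EuclideanSpace ℝ (Fin d)) (C : Fin d → ℝ)
    (hΦ : AlmostAdditiveVec A Φ C) :
    (∀ Ω : Set (EuclideanSpace ℝ (Fin d)), IsCompact Ω → Ω ⊆ LPhi A Φ →
      pdimD (dPsi A Ψ) (⋃ α ∈ Ω, EPhi A Φ α) ≤
        ENNReal.ofReal (sSup {r : ℝ | ∃ α ∈ Ω, r = LambdaD A Φ Ψ α})) ∧
    (∀ α ∈ LPhi A Φ,
      hdimD (dPsi A Ψ) (EPhi A Φ α) ≤ pdimD (dPsi A Ψ) (EPhi A Φ α) ∧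
      pdimD (dPsi A Ψ) (EPhi A Φ α) ≤ ENNReal.ofReal (LambdaD A Φ Ψ α)) :=
  statement9_general A hA Ψ CΨ hΨ hneg Φ
end AlmostAdditivePaper
end
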